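/- arXiv:math-ph/0305016 — 7 statements merged into one kernel-verified Lean document; each statement's English description precedes it below -/
import Mathlib

section
/- (Hoggar's theorem.) Let V and W be independent ℤ₊-valued LC random variables, each of whose support is an interval of ℤ₊ containing 0 (i.e. {s : P(V = s) > 0} is of the form {0,1,…,m} or all of ℤ₊, and likewise for W). Then the sum V + W is LC. -/
/-!
Write `r n = ∑ k, p k * q (n - k)` and extend `p`, `q` by zero to `ℤ`. Then
`r (n + 1) ^ 2 - r n * r (n + 2)` is the determinant of the product of the `2 × N` matrix with
rows `p k`, `p (k - 1)` and the `N × 2` matrix with columns `q (n + 1 - k)`, `q (n + 2 - k)`.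
By Cauchy–Binet it is a sum of products of `2 × 2` minors of the two factors, and all these
minors are nonnegative: for a nonnegative log-concave sequence without internal zeros the ratio
`f (k + 1) / f k` is nonincreasing.
-/

open Finset

section ExtendByZero

variable {R : Type*}

-- On `ℕ`, truncated subtraction would turn the vanishing terms `q (n - k)`, `k > n`, into `q 0`.
def extendByZero [Zero R] (f : ℕ → R) (z : ℤ) : R := if 0 ≤ z then f z.toNat else 0

@[simp]
theorem extendByZero_natCast [Zero R] (f : ℕ → R) (n : ℕ) : extendByZero f n = f n := by
  simp [extendByZero]

theorem extendByZero_of_neg [Zero R] (f : ℕ → R) {z : ℤ} (hz : z < 0) :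
    extendByZero f z = 0 :=
  if_neg hz.not_ge

variable [NonUnitalNonAssocSemiring R]

def discreteConvolution (p q : ℕ → R) (n : ℕ) : R := ∑ k ∈ range (n + 1), p k * q (n - k)

theorem discreteConvolution_eq_sum_extendByZero (p q : ℕ → R) {m N : ℕ} (hmN : m < N) :
    discreteConvolution p q m =
      ∑ k ∈ range N, extendByZero p k * extendByZero q (m - k) := by
  rw [discreteConvolution, ← sum_subset (range_subset_range.2 hmN)]
  · refine sum_congr rfl fun k hk => ?_
    rw [mem_range] at hk
    rw [← Nat.cast_sub (by omega), extendByZero_natCast, extendByZero_natCast]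
  · intro k _ hk
    rw [mem_range, not_lt] at hk
    rw [extendByZero_of_neg q (by omega), mul_zero]

theorem discreteConvolution_eq_sum_extendByZero_pred (p q : ℕ → R) {m N : ℕ} (hmN : m < N) :
    discreteConvolution p q m =
      ∑ k ∈ range (N + 1), extendByZero p (k - 1) * extendByZero q (m + 1 - k) := by
  rw [discreteConvolution_eq_sum_extendByZero p q hmN, sum_range_succ' _ N, Nat.cast_zero,
    extendByZero_of_neg p (by norm_num), zero_mul, add_zero]
  refine sum_congr rfl fun k _ => ?_
  push_cast
  ring_nf

end ExtendByZero

section LogConcave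

variable {R : Type*} [CommRing R] [LinearOrder R] [IsStrictOrderedRing R]

theorem succ_mul_le_mul_succ_of_logConcave {f : ℕ → R} (hf0 : ∀ n, 0 ≤ f n)
    (hlc : ∀ n, f n * f (n + 2) ≤ f (n + 1) ^ 2)
    (hsupp : ∀ n m, m ≤ n → 0 < f n → 0 < f m) {a b : ℕ} (hab : a ≤ b) :
    f (b + 1) * f a ≤ f b * f (a + 1) := by
  induction b, hab using Nat.le_induction with
  | base => rw [mul_comm]
  | succ b hab ih =>
    rcases (hf0 (b + 1)).eq_or_lt with hb | hb
    · have : f (b + 2) = 0 := by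
        by_contra h
        exact hb.not_lt (hsupp (b + 2) _ (by omega) ((hf0 _).lt_of_ne' h))
      rw [this, zero_mul]
      exact mul_nonneg (hf0 _) (hf0 _)
    · refine le_of_mul_le_mul_left ?_ hb
      calc f (b + 1) * (f (b + 2) * f a) = f (b + 2) * (f (b + 1) * f a) := by ring
        _ ≤ f (b + 2) * (f b * f (a + 1)) := mul_le_mul_of_nonneg_left ih (hf0 _)
        _ = f b * f (b + 2) * f (a + 1) := by ring
        _ ≤ f (b + 1) ^ 2 * f (a + 1) := mul_le_mul_of_nonneg_right (hlc b) (hf0 _)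
        _ = f (b + 1) * (f (b + 1) * f (a + 1)) := by ring

theorem extendByZero_succ_mul_le_mul_succ {f : ℕ → R} (hf0 : ∀ n, 0 ≤ f n)
    (hlc : ∀ n, f n * f (n + 2) ≤ f (n + 1) ^ 2)
    (hsupp : ∀ n m, m ≤ n → 0 < f n → 0 < f m) {i j : ℤ} (hij : i ≤ j) :
    extendByZero f (j + 1) * extendByZero f i ≤ extendByZero f j * extendByZero f (i + 1) := by
  have hF0 (z : ℤ) : 0 ≤ extendByZero f z := by
    unfold extendByZero
    split_ifs
    exacts [hf0 _, le_rfl]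
  rcases lt_or_ge i 0 with hi | hi
  · rw [extendByZero_of_neg f hi, mul_zero]
    exact mul_nonneg (hF0 _) (hF0 _)
  · lift i to ℕ using hi
    lift j to ℕ using (by omega)
    exact_mod_cast succ_mul_le_mul_succ_of_logConcave hf0 hlc hsupp (by omega)

theorem sum_mul_sum_le_sum_mul_sum_of_minors_nonneg {ι : Type*} [LinearOrder ι]
    (s : Finset ι) {a a' b b' : ι → R} (ha : ∀ k l, k ≤ l → a' k * a l ≤ a k * a' l)
    (hb : ∀ k l, k ≤ l → b l * b' k ≤ b k * b' l) :
    (∑ k ∈ s, a' k * b k) * (∑ k ∈ s, a k * b' k) ≤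
      (∑ k ∈ s, a k * b k) * (∑ k ∈ s, a' k * b' k) := by
  set g : ι → ι → R := fun k l => a k * b k * (a' l * b' l) - a' k * b k * (a l * b' l)
  have hg : ∑ k ∈ s, ∑ l ∈ s, g k l =
      (∑ k ∈ s, a k * b k) * (∑ k ∈ s, a' k * b' k) -
        (∑ k ∈ s, a' k * b k) * (∑ k ∈ s, a k * b' k) := by
    simp only [g, sum_mul_sum, sum_sub_distrib]
  have hswap : ∑ k ∈ s, ∑ l ∈ s, g l k = ∑ k ∈ s, ∑ l ∈ s, g k l := sum_comm
  -- Cauchy–Binet: twice the difference is a sum of products of 2 × 2 minors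
  have hminors : ∑ k ∈ s, ∑ l ∈ s, (a k * a' l - a' k * a l) * (b k * b' l - b l * b' k) =
      2 * ∑ k ∈ s, ∑ l ∈ s, g k l := by
    rw [two_mul]
    nth_rewrite 1 [← hswap]
    simp only [← sum_add_distrib]
    refine sum_congr rfl fun k _ => sum_congr rfl fun l _ => ?_
    simp only [g]
    ring
  have hprod (k l : ι) : 0 ≤ (a k * a' l - a' k * a l) * (b k * b' l - b l * b' k) := by
    rcases le_total k l with h | h
    · exact mul_nonneg (sub_nonneg.2 (ha k l h)) (sub_nonneg.2 (hb k l h))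
    · have := mul_nonneg (sub_nonneg.2 (ha l k h)) (sub_nonneg.2 (hb l k h))
      linarith
  have hsum := sum_nonneg fun k (_ : k ∈ s) => sum_nonneg fun l (_ : l ∈ s) => hprod k l
  rw [hminors, hg] at hsum
  linarith

theorem discreteConvolution_mul_le_sq {p q : ℕ → R}
    (hp0 : ∀ n, 0 ≤ p n) (hplc : ∀ n, p n * p (n + 2) ≤ p (n + 1) ^ 2)
    (hpsupp : ∀ n m, m ≤ n → 0 < p n → 0 < p m)
    (hq0 : ∀ n, 0 ≤ q n) (hqlc : ∀ n, q n * q (n + 2) ≤ q (n + 1) ^ 2)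
    (hqsupp : ∀ n m, m ≤ n → 0 < q n → 0 < q m) (n : ℕ) :
    discreteConvolution p q n * discreteConvolution p q (n + 2) ≤
      discreteConvolution p q (n + 1) ^ 2 := by
  set P := extendByZero p
  set Q := extendByZero q
  have hP (k l : ℕ) (hkl : k ≤ l) : P (k - 1) * P l ≤ P k * P (l - 1) := by
    have := extendByZero_succ_mul_le_mul_succ hp0 hplc hpsupp (i := k - 1) (j := l - 1)
      (by omega)
    simp only [sub_add_cancel] at this
    linarith
  have hQ (k l : ℕ) (hkl : k ≤ l) :
      Q (n + 1 - l) * Q (n + 1 + 1 - k) ≤ Q (n + 1 - k) * Q (n + 1 + 1 - l) := by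
    have := extendByZero_succ_mul_le_mul_succ hq0 hqlc hqsupp (i := n + 1 - l) (j := n + 1 - k)
      (by omega)
    have e (x : ℤ) : (n : ℤ) + 1 - x + 1 = n + 1 + 1 - x := by ring
    simp only [e] at this
    linarith
  have key := sum_mul_sum_le_sum_mul_sum_of_minors_nonneg (range (n + 3)) hP hQ
  have hr₀ : discreteConvolution p q n =
      ∑ k ∈ range (n + 3), P (k - 1) * Q (n + 1 - k) :=
    mod_cast discreteConvolution_eq_sum_extendByZero_pred p q (N := n + 2) (by omega)
  have hr₁ : discreteConvolution p q (n + 1) =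
      ∑ k ∈ range (n + 3), P k * Q (n + 1 - k) :=
    mod_cast discreteConvolution_eq_sum_extendByZero p q (m := n + 1) (by omega)
  have hr₁' : discreteConvolution p q (n + 1) =
      ∑ k ∈ range (n + 3), P (k - 1) * Q (n + 1 + 1 - k) :=
    mod_cast discreteConvolution_eq_sum_extendByZero_pred p q (N := n + 2) (by omega)
  have hr₂ : discreteConvolution p q (n + 2) =
      ∑ k ∈ range (n + 3), P k * Q (n + 1 + 1 - k) :=
    mod_cast discreteConvolution_eq_sum_extendByZero p q (m := n + 2) (by omega)
  rw [← hr₀, ← hr₁, ← hr₁', ← hr₂] at key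
  rwa [sq]

end LogConcave

theorem stmt3_general (p q : ℕ → ℝ)
    (hp0 : ∀ s, 0 ≤ p s) (hq0 : ∀ s, 0 ≤ q s)
    (hplc : ∀ s : ℕ, 1 ≤ s → p s ^ 2 ≥ p (s - 1) * p (s + 1))
    (hqlc : ∀ s : ℕ, 1 ≤ s → q s ^ 2 ≥ q (s - 1) * q (s + 1))
    (hpint : ∀ s t : ℕ, t ≤ s → 0 < p s → 0 < p t)
    (hqint : ∀ s t : ℕ, t ≤ s → 0 < q s → 0 < q t) :
    ∀ s : ℕ, 1 ≤ s →
      (∑ k ∈ Finset.range (s + 1), p k * q (s - k)) ^ 2 ≥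
        (∑ k ∈ Finset.range s, p k * q (s - 1 - k)) *
          (∑ k ∈ Finset.range (s + 2), p k * q (s + 1 - k)) := by
  intro s hs
  obtain ⟨n, rfl⟩ : ∃ n, s = n + 1 := ⟨s - 1, by omega⟩
  have := discreteConvolution_mul_le_sq hp0 (fun m => hplc (m + 1) (by omega)) hpint
    hq0 (fun m => hqlc (m + 1) (by omega)) hqint n
  simpa only [discreteConvolution, Nat.add_sub_cancel] using this

/-- Hoggar's theorem: if `V` and `W` are independent `ℤ₊`-valued
log-concave random variables (with probability mass functions `p`, `q`), each of whose
support is an interval of `ℤ₊` containing `0`, then `V + W` is log-concave.  The mass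
function of `V + W` is the convolution `r s = Σ_{k=0}^{s} p k · q (s - k)`. -/
theorem stmt3 (p q : ℕ → ℝ)
    (hp0 : ∀ s, 0 ≤ p s) (hq0 : ∀ s, 0 ≤ q s)
    (hp1 : ∑' s, p s = 1) (hq1 : ∑' s, q s = 1)
    (hplc : ∀ s : ℕ, 1 ≤ s → p s ^ 2 ≥ p (s - 1) * p (s + 1))
    (hqlc : ∀ s : ℕ, 1 ≤ s → q s ^ 2 ≥ q (s - 1) * q (s + 1))
    (hpzero : 0 < p 0) (hpint : ∀ s t : ℕ, t ≤ s → 0 < p s → 0 < p t)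
    (hqzero : 0 < q 0) (hqint : ∀ s t : ℕ, t ≤ s → 0 < q s → 0 < q t) :
    ∀ s : ℕ, 1 ≤ s →
      (∑ k ∈ Finset.range (s + 1), p k * q (s - k)) ^ 2 ≥
        (∑ k ∈ Finset.range s, p k * q (s - 1 - k)) *
          (∑ k ∈ Finset.range (s + 2), p k * q (s + 1 - k)) :=
  stmt3_general p q hp0 hq0 hplc hqlc hpint hqint
end

section
/- Let V₁, …, V_ℓ be independent ℤ₊-valued LC random variables, each of whose support is an interval of ℤ₊ containing 0, and let S_ℓ = Σ_{i=1}^ℓ V_i. Fix an integer n with P(S_ℓ = n) > 0 and let (W₁, …, W_ℓ) have the conditional joint distribution of (V₁, …, V_ℓ) given S_ℓ = n. Then the family (W₁, …, W_ℓ) is negatively associated: for all disjoint subsets A, B ⊆ {1, …, ℓ} and all bounded coordinatewise nondecreasing functions f and g, Cov(f(W_i : i ∈ A), g(W_j : j ∈ B)) ≤ 0. -/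
open Finset

/-- Normalising constant `P(S_ℓ = n) = Σ_{k : Σᵢ kᵢ = n} Πᵢ pᵢ(kᵢ)` for independent
`ℤ₊`-valued variables with mass functions `p i`. -/
noncomputable def condZ (ℓ n : ℕ) (p : Fin ℓ → ℕ → ℝ) : ℝ :=
  ∑ k ∈ Finset.Nat.antidiagonalTuple ℓ n, ∏ i, p i (k i)

/-- Expectation of `h` under the conditional joint distribution of `(V₁,…,V_ℓ)`
given `S_ℓ = n`. -/
noncomputable def condExp (ℓ n : ℕ) (p : Fin ℓ → ℕ → ℝ) (h : (Fin ℓ → ℕ) → ℝ) : ℝ :=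
  ∑ k ∈ Finset.Nat.antidiagonalTuple ℓ n, ((∏ i, p i (k i)) / condZ ℓ n p) * h k


lemma lc_ratio (q : ℕ → ℝ) (h0 : ∀ s, 0 ≤ q s)
    (hlc : ∀ s : ℕ, 1 ≤ s → q s ^ 2 ≥ q (s - 1) * q (s + 1))
    (hint : ∀ s t : ℕ, t ≤ s → 0 < q s → 0 < q t) :
    ∀ a b : ℕ, a ≤ b → q a * q (b + 1) ≤ q (a + 1) * q b := by
  intro a b hab
  induction b, hab using Nat.le_induction with
  | base => ring_nf; exact le_refl _
  | succ b hab ih =>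
    rcases eq_or_lt_of_le (h0 (b+1)) with hq | hq
    · have h2 : q (b + 1 + 1) = 0 := by
        by_contra h
        have := hint (b+2) (b+1) (by omega) (lt_of_le_of_ne (h0 _) (Ne.symm h))
        rw [← hq] at this; exact lt_irrefl _ this
      rw [h2]
      have := mul_nonneg (h0 (a+1)) (h0 (b+1))
      linarith [mul_nonneg (h0 a) (h0 (b+1+1))]
    · have hlcb := hlc (b+1) (by omega)
      simp only [Nat.add_sub_cancel] at hlcb
      have key : q a * q (b + 1 + 1) * q (b+1) ≤ q (a + 1) * q (b+1) * q (b+1) := by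
        calc q a * q (b + 1 + 1) * q (b+1) = (q a * q (b+1)) * q (b+1+1) := by ring
        _ ≤ (q (a+1) * q b) * q (b+1+1) := mul_le_mul_of_nonneg_right ih (h0 _)
        _ = q (a+1) * (q b * q (b+1+1)) := by ring
        _ ≤ q (a+1) * (q (b+1))^2 := mul_le_mul_of_nonneg_left (hlcb) (h0 _)
        _ = q (a + 1) * q (b+1) * q (b+1) := by ring
      exact le_of_mul_le_mul_right key hq

noncomputable def myconv (p q : ℕ → ℝ) (m : ℕ) : ℝ :=
  ∑ ij ∈ Finset.HasAntidiagonal.antidiagonal m, p ij.1 * q ij.2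

/-- guarded shift kernel -/
noncomputable def Kk (p : ℕ → ℝ) (j x : ℕ) : ℝ := if x ≤ j then p (j - x) else 0

/-- guarded shift of a sequence -/
noncomputable def Lq (q : ℕ → ℝ) (x : ℕ) : ℝ := if 1 ≤ x then q (x - 1) else 0

lemma Kk_nonneg (p : ℕ → ℝ) (hp : ∀ s, 0 ≤ p s) (j x : ℕ) : 0 ≤ Kk p j x := by
  unfold Kk; split
  · exact hp _
  · exact le_refl _

lemma Lq_nonneg (q : ℕ → ℝ) (hq : ∀ s, 0 ≤ q s) (x : ℕ) : 0 ≤ Lq q x := by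
  unfold Lq; split
  · exact hq _
  · exact le_refl _

section conv
variable (p q : ℕ → ℝ)

lemma myconv_nonneg (hp : ∀ s, 0 ≤ p s) (hq : ∀ s, 0 ≤ q s) (m : ℕ) :
    0 ≤ myconv p q m :=
  Finset.sum_nonneg fun ij _ => mul_nonneg (hp _) (hq _)

lemma myconv_eq_range (m : ℕ) :
    myconv p q m = ∑ x ∈ range (m+1), p (m - x) * q x := by
  rw [myconv, Finset.Nat.sum_antidiagonal_eq_sum_range_succ_mk, ← Finset.sum_range_reflect]
  apply Finset.sum_congr rfl
  intro x hx
  rw [mem_range] at hx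
  congr 2 <;> omega

lemma myconv_zero : myconv p q 0 = p 0 * q 0 := by
  simp [myconv]

lemma myconv_interval (hp : ∀ s, 0 ≤ p s) (hq : ∀ s, 0 ≤ q s)
    (hpi : ∀ s t : ℕ, t ≤ s → 0 < p s → 0 < p t)
    (hqi : ∀ s t : ℕ, t ≤ s → 0 < q s → 0 < q t)
    (m t : ℕ) (ht : t ≤ m) (hm : 0 < myconv p q m) : 0 < myconv p q t := by
  obtain ⟨ij, hij, hpos⟩ : ∃ ij ∈ Finset.HasAntidiagonal.antidiagonal m, 0 < p ij.1 * q ij.2 := by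
    by_contra h
    push_neg at h
    exact absurd (Finset.sum_nonpos h) (by rw [← myconv]; linarith)
  obtain ⟨i, j⟩ := ij
  rw [Finset.HasAntidiagonal.mem_antidiagonal] at hij
  simp only at hij hpos
  have hpi0 : 0 < p i := by
    rcases (hp i).eq_or_lt with h | h
    · rw [← h, zero_mul] at hpos; exact absurd hpos (lt_irrefl 0)
    · exact h
  have hqj0 : 0 < q j := by
    rcases (hq j).eq_or_lt with h | h
    · rw [← h, mul_zero] at hpos; exact absurd hpos (lt_irrefl 0)
    · exact h
  obtain ⟨i', j', hi', hj', hij'⟩ : ∃ i' j', i' ≤ i ∧ j' ≤ j ∧ i' + j' = t := by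
    rcases le_or_gt t j with h | h
    · exact ⟨0, t, Nat.zero_le _, h, by omega⟩
    · exact ⟨t - j, j, by omega, le_refl _, by omega⟩
  have hterm : 0 < p i' * q j' := mul_pos (hpi i i' hi' hpi0) (hqi j j' hj' hqj0)
  have hmem : (i', j') ∈ Finset.HasAntidiagonal.antidiagonal t := by
    rw [Finset.HasAntidiagonal.mem_antidiagonal]; exact hij'
  calc (0:ℝ) < p i' * q j' := hterm
  _ ≤ myconv p q t :=
      Finset.single_le_sum (f := fun ij : ℕ × ℕ => p ij.1 * q ij.2)
        (fun ij _ => mul_nonneg (hp _) (hq _)) hmem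

lemma myconv_repr0 (m N : ℕ) (hN : m + 1 ≤ N) :
    myconv p q m = ∑ x ∈ range N, Kk p m x * q x := by
  rw [myconv_eq_range]
  rw [← Finset.sum_subset (Finset.range_subset_range.2 hN)]
  · apply Finset.sum_congr rfl
    intro x hx
    rw [mem_range] at hx
    rw [Kk, if_pos (by omega)]
  · intro x _ hx
    rw [mem_range] at hx
    rw [Kk, if_neg (by omega), zero_mul]

lemma myconv_repr1 (m N : ℕ) (hN : m + 2 ≤ N) :
    myconv p q m = ∑ x ∈ range N, Kk p (m+1) x * Lq q x := by
  rw [← Finset.sum_subset (Finset.range_subset_range.2 hN)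
      (by intro x _ hx; rw [mem_range] at hx; rw [Kk, if_neg (by omega), zero_mul])]
  rw [Finset.sum_range_succ' _ (m+1)]
  rw [show Lq q 0 = 0 from if_neg (by omega), mul_zero, add_zero]
  rw [myconv_eq_range]
  apply Finset.sum_congr rfl
  intro x hx
  rw [mem_range] at hx
  rw [Kk, Lq, if_pos (by omega), if_pos (by omega)]
  congr 2 <;> omega

lemma myconv_lc (hp : ∀ s, 0 ≤ p s) (hq : ∀ s, 0 ≤ q s)
    (hplc : ∀ s : ℕ, 1 ≤ s → p s ^ 2 ≥ p (s - 1) * p (s + 1))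
    (hqlc : ∀ s : ℕ, 1 ≤ s → q s ^ 2 ≥ q (s - 1) * q (s + 1))
    (hpi : ∀ s t : ℕ, t ≤ s → 0 < p s → 0 < p t)
    (hqi : ∀ s t : ℕ, t ≤ s → 0 < q s → 0 < q t)
    (m : ℕ) (hm : 1 ≤ m) :
    myconv p q (m - 1) * myconv p q (m + 1) ≤ myconv p q m ^ 2 := by
  set N := m + 2 with hNdef
  have hc1 : myconv p q m = ∑ x ∈ range N, Kk p (m+1) x * Lq q x :=
    myconv_repr1 p q m N (by omega)
  have hc0 : myconv p q m = ∑ x ∈ range N, Kk p m x * q x := myconv_repr0 p q m N (by omega)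
  have hd1 : myconv p q (m+1) = ∑ x ∈ range N, Kk p (m+1) x * q x :=
    myconv_repr0 p q (m+1) N (by omega)
  have hd0 : myconv p q (m-1) = ∑ x ∈ range N, Kk p m x * Lq q x := by
    rw [myconv_repr1 p q (m-1) N (by omega), show m - 1 + 1 = m by omega]
  set A : ℕ → ℕ → ℝ := fun x y => Kk p (m+1) x * Lq q x * (Kk p m y * q y) -
      Kk p (m+1) x * q x * (Kk p m y * Lq q y) with hA
  have expand : myconv p q m ^ 2 - myconv p q (m-1) * myconv p q (m+1) =
      ∑ x ∈ range N, ∑ y ∈ range N, A x y := by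
    have e1 : myconv p q m ^ 2 = ∑ x ∈ range N, ∑ y ∈ range N,
        Kk p (m+1) x * Lq q x * (Kk p m y * q y) := by
      rw [sq]
      nth_rewrite 2 [hc0]
      nth_rewrite 1 [hc1]
      rw [Finset.sum_mul_sum]
    have e2 : myconv p q (m-1) * myconv p q (m+1) = ∑ x ∈ range N, ∑ y ∈ range N,
        Kk p (m+1) x * q x * (Kk p m y * Lq q y) := by
      rw [hd0, hd1, Finset.sum_mul_sum, Finset.sum_comm]
      apply Finset.sum_congr rfl; intro x _
      apply Finset.sum_congr rfl; intro y _
      ring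
    rw [e1, e2, ← Finset.sum_sub_distrib]
    apply Finset.sum_congr rfl; intro x _
    rw [← Finset.sum_sub_distrib]
  have key : ∀ x y : ℕ, x ≤ y → 0 ≤ A x y + A y x := by
    intro x y hxy
    have factored : A x y + A y x =
        (Kk p (m+1) x * Kk p m y - Kk p (m+1) y * Kk p m x) *
          (Lq q x * q y - q x * Lq q y) := by
      simp only [hA]; ring
    rw [factored]
    have fact1 : Kk p (m+1) x * Kk p m y - Kk p (m+1) y * Kk p m x ≤ 0 := by
      rcases Nat.lt_or_ge m y with hy | hy
      · have hKy : Kk p m y = 0 := if_neg (by omega)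
        rw [hKy, mul_zero, zero_sub, neg_nonpos]
        exact mul_nonneg (Kk_nonneg p hp _ _) (Kk_nonneg p hp _ _)
      · -- y ≤ m, so x ≤ m
        rw [show Kk p (m+1) x = p (m+1-x) from if_pos (by omega),
            show Kk p m y = p (m-y) from if_pos hy,
            show Kk p (m+1) y = p (m+1-y) from if_pos (by omega),
            show Kk p m x = p (m-x) from if_pos (by omega)]
        have hr := lc_ratio p hp hplc hpi (m - y) (m - x) (by omega)
        rw [show m - y + 1 = m + 1 - y by omega, show m - x + 1 = m + 1 - x by omega] at hr
        linarith
    have fact2 : Lq q x * q y - q x * Lq q y ≤ 0 := by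
      rcases Nat.lt_or_ge x 1 with hx | hx
      · rw [show Lq q x = 0 from if_neg (by omega), zero_mul, zero_sub, neg_nonpos]
        exact mul_nonneg (hq _) (Lq_nonneg q hq _)
      · rw [show Lq q x = q (x-1) from if_pos hx,
            show Lq q y = q (y-1) from if_pos (by omega)]
        have hr := lc_ratio q hq hqlc hqi (x - 1) (y - 1) (by omega)
        rw [show x - 1 + 1 = x by omega, show y - 1 + 1 = y by omega] at hr
        linarith
    have h1 := mul_nonneg (neg_nonneg.2 fact1) (neg_nonneg.2 fact2)
    rw [neg_mul_neg] at h1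
    exact h1
  have swap : ∑ x ∈ range N, ∑ y ∈ range N, A x y
      = ∑ x ∈ range N, ∑ y ∈ range N, A y x := Finset.sum_comm
  have twice : 2 * (∑ x ∈ range N, ∑ y ∈ range N, A x y)
      = ∑ x ∈ range N, ∑ y ∈ range N, (A x y + A y x) := by
    rw [two_mul]
    nth_rewrite 2 [swap]
    rw [← Finset.sum_add_distrib]
    apply Finset.sum_congr rfl; intro x _
    rw [← Finset.sum_add_distrib]
  have pos : 0 ≤ ∑ x ∈ range N, ∑ y ∈ range N, (A x y + A y x) := by
    apply Finset.sum_nonneg; intro x _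
    apply Finset.sum_nonneg; intro y _
    rcases le_total x y with h | h
    · exact key x y h
    · have := key y x h; linarith
  nlinarith [expand, twice, pos]

end conv
/-- unnormalized expectation -/
noncomputable def ES (L n : ℕ) (p : Fin L → ℕ → ℝ) (f : (Fin L → ℕ) → ℝ) : ℝ :=
  ∑ k ∈ Finset.Nat.antidiagonalTuple L n, (∏ i, p i (k i)) * f k

lemma condZ_eq_ES (L n : ℕ) (p : Fin L → ℕ → ℝ) :
    condZ L n p = ES L n p (fun _ => 1) := by
  unfold condZ ES
  simp

lemma ES_succ (L n : ℕ) (p : Fin (L+1) → ℕ → ℝ) (f : (Fin (L+1) → ℕ) → ℝ) :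
    ES (L+1) n p f = ∑ ij ∈ Finset.HasAntidiagonal.antidiagonal n,
      p 0 ij.1 * ES L ij.2 (fun i => p i.succ) (fun k => f (Fin.cons ij.1 k)) := by
  unfold ES
  simp_rw [Finset.mul_sum]
  rw [Finset.sum_sigma']
  symm
  apply Finset.sum_nbij' (i := fun (x : (_ : ℕ × ℕ) × (Fin L → ℕ)) => Fin.cons x.1.1 x.2)
    (j := fun (k : Fin (L+1) → ℕ) =>
      (⟨(k 0, ∑ i : Fin L, k i.succ), Fin.tail k⟩ : (_ : ℕ × ℕ) × (Fin L → ℕ)))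
  · intro a ha
    simp only [Finset.mem_sigma, Finset.HasAntidiagonal.mem_antidiagonal,
      Finset.Nat.mem_antidiagonalTuple] at ha ⊢
    rw [Fin.sum_cons]
    rw [ha.2]
    exact ha.1
  · intro k hk
    simp only [Finset.Nat.mem_antidiagonalTuple] at hk
    simp only [Finset.mem_sigma, Finset.HasAntidiagonal.mem_antidiagonal, Finset.Nat.mem_antidiagonalTuple]
    constructor
    · rw [← hk, Fin.sum_univ_succ]
    · rfl
  · rintro ⟨⟨a1, a2⟩, av⟩ ha
    simp only [Finset.mem_sigma, Finset.HasAntidiagonal.mem_antidiagonal, Finset.Nat.mem_antidiagonalTuple] at ha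
    simp only [Fin.cons_zero, Fin.cons_succ, Fin.tail_cons]
    rw [ha.2]
  · intro k hk
    exact Fin.cons_self_tail k
  · intro a ha
    rw [Fin.prod_univ_succ]
    simp only [Fin.cons_zero, Fin.cons_succ]
    ring

lemma lemB (N : ℕ) (π π' F F' : ℕ → ℝ)
    (htot : ∑ x ∈ range N, π x = ∑ x ∈ range N, π' x)
    (h1 : ∀ x, 0 ≤ ((∑ y ∈ Ico x N, π y) - (∑ y ∈ Ico (x+1) N, π' y)) * (F' x - F x))
    (h2 : ∀ x, 0 ≤ ((∑ y ∈ Ico (x+1) N, π' y) - (∑ y ∈ Ico (x+1) N, π y)) * (F' (x+1) - F x)) :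
    ∑ x ∈ range N, π x * F x ≤ ∑ x ∈ range N, π' x * F' x := by
  set G : ℕ → ℝ := fun x => ∑ y ∈ Ico x N, π y with hG
  set G' : ℕ → ℝ := fun x => ∑ y ∈ Ico x N, π' y with hG'
  have hGstep : ∀ x < N, π x = G x - G (x+1) := by
    intro x hx
    have := Finset.sum_eq_sum_Ico_succ_bot hx π
    simp only [hG]
    linarith
  have hG'step : ∀ x < N, π' x = G' x - G' (x+1) := by
    intro x hx
    have := Finset.sum_eq_sum_Ico_succ_bot hx π'
    simp only [hG']
    linarith
  have hGN : G N = 0 := by simp [hG]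
  have hG'N : G' N = 0 := by simp [hG']
  have hG0 : G 0 = G' 0 := by
    simp only [hG, hG']
    rw [Finset.range_eq_Ico] at htot
    exact htot
  have e2 : ∑ x ∈ range N, π x * F x = ∑ x ∈ range N, (G x - G (x+1)) * F x :=
    Finset.sum_congr rfl fun x hx => by rw [← hGstep x (mem_range.1 hx)]
  have e1 : ∑ x ∈ range N, π' x * F' x = ∑ x ∈ range N, (G' x - G' (x+1)) * F' x :=
    Finset.sum_congr rfl fun x hx => by rw [← hG'step x (mem_range.1 hx)]
  rw [e1, e2]
  set w : ℕ → ℝ := fun x => (G' x - G x) * F' x with hw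
  have hsplit : ∀ x : ℕ,
      (G x - G' (x+1)) * (F' x - F x) + (G' (x+1) - G (x+1)) * (F' (x+1) - F x)
      = ((G' x - G' (x+1)) * F' x - (G x - G (x+1)) * F x) + (w (x+1) - w x) := by
    intro x
    simp only [hw]
    ring
  have htel : ∑ x ∈ range N, (w (x+1) - w x) = w N - w 0 := Finset.sum_range_sub w N
  have hwN : w N = 0 := by simp only [hw, hGN, hG'N]; ring
  have hw0 : w 0 = 0 := by simp only [hw, hG0]; ring
  have hD : 0 ≤ ∑ x ∈ range N,
      ((G x - G' (x+1)) * (F' x - F x) + (G' (x+1) - G (x+1)) * (F' (x+1) - F x)) :=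
    Finset.sum_nonneg fun x _ => add_nonneg (h1 x) (h2 x)
  have hexp : ∑ x ∈ range N,
      ((G x - G' (x+1)) * (F' x - F x) + (G' (x+1) - G (x+1)) * (F' (x+1) - F x))
      = (∑ x ∈ range N, ((G' x - G' (x+1)) * F' x - (G x - G (x+1)) * F x))
        + (w N - w 0) := by
    rw [← htel, ← Finset.sum_add_distrib]
    exact Finset.sum_congr rfl fun x _ => hsplit x
  rw [hexp, hwN, hw0] at hD
  simp only [sub_zero] at hD
  rw [Finset.sum_sub_distrib] at hD
  linarith
/-- generic representation of antidiagonal-weighted sums over a large range -/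
lemma antidiag_repr (u : ℕ → ℕ → ℝ) (j N : ℕ) (hN : j + 1 ≤ N) :
    ∑ ij ∈ Finset.HasAntidiagonal.antidiagonal j, u ij.1 ij.2
      = ∑ x ∈ range N, if x ≤ j then u x (j - x) else 0 := by
  rw [Finset.Nat.sum_antidiagonal_eq_sum_range_succ_mk]
  rw [← Finset.sum_subset (Finset.range_subset_range.2 hN)
      (by intro x _ hx; rw [mem_range] at hx; rw [if_neg (by omega)])]
  exact Finset.sum_congr rfl fun x hx => by rw [if_pos (by rw [mem_range] at hx; omega)]

section twovar
variable (p0 q : ℕ → ℝ) (h : ℕ → ℕ → ℝ) (m : ℕ)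

/-- The two-variable Efron step. -/
lemma twovar
    (hp0 : ∀ s, 0 ≤ p0 s) (hq : ∀ s, 0 ≤ q s)
    (hp0lc : ∀ s : ℕ, 1 ≤ s → p0 s ^ 2 ≥ p0 (s - 1) * p0 (s + 1))
    (hqlc : ∀ s : ℕ, 1 ≤ s → q s ^ 2 ≥ q (s - 1) * q (s + 1))
    (hp0i : ∀ s t : ℕ, t ≤ s → 0 < p0 s → 0 < p0 t)
    (hqi : ∀ s t : ℕ, t ≤ s → 0 < q s → 0 < q t)
    (hh0 : ∀ v s, 0 ≤ h v s)
    (hhq : ∀ v s, q s = 0 → h v s = 0)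
    (hmono : ∀ v s, h v s ≤ h (v+1) s)
    (hcross : ∀ v s, h v s * q (s+1) ≤ h v (s+1) * q s) :
    (∑ ij ∈ Finset.HasAntidiagonal.antidiagonal m, p0 ij.1 * h ij.1 ij.2) *
        (∑ ij ∈ Finset.HasAntidiagonal.antidiagonal (m+1), p0 ij.1 * q ij.2)
      ≤ (∑ ij ∈ Finset.HasAntidiagonal.antidiagonal (m+1), p0 ij.1 * h ij.1 ij.2) *
        (∑ ij ∈ Finset.HasAntidiagonal.antidiagonal m, p0 ij.1 * q ij.2) := by
  classical
  set N := m + 2 with hN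
  set rm : ℝ := ∑ ij ∈ Finset.HasAntidiagonal.antidiagonal m, p0 ij.1 * q ij.2 with hrm
  set rm1 : ℝ := ∑ ij ∈ Finset.HasAntidiagonal.antidiagonal (m+1), p0 ij.1 * q ij.2 with hrm1
  set π : ℕ → ℝ := fun x => if x ≤ m then p0 x * q (m - x) else 0 with hπ
  set π' : ℕ → ℝ := fun x => if x ≤ m + 1 then p0 x * q (m + 1 - x) else 0 with hπ'
  have hπnn : ∀ x, 0 ≤ π x := by
    intro x; simp only [hπ]; split
    · exact mul_nonneg (hp0 _) (hq _)
    · exact le_refl _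
  have hπ'nn : ∀ x, 0 ≤ π' x := by
    intro x; simp only [hπ']; split
    · exact mul_nonneg (hp0 _) (hq _)
    · exact le_refl _
  have hrmr : rm = ∑ x ∈ range N, π x := by
    rw [hrm, antidiag_repr (fun a b => p0 a * q b) m N (by omega)]
  have hrm1r : rm1 = ∑ x ∈ range N, π' x := by
    rw [hrm1, antidiag_repr (fun a b => p0 a * q b) (m+1) N (by omega)]
  have hrm_nn : 0 ≤ rm := by rw [hrmr]; exact Finset.sum_nonneg fun x _ => hπnn x
  have hrm1_nn : 0 ≤ rm1 := by rw [hrm1r]; exact Finset.sum_nonneg fun x _ => hπ'nn x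
  set F : ℕ → ℝ := fun x => if x ≤ m ∧ 0 < q (m - x) then h x (m - x) / q (m - x) else 0
    with hF
  set F' : ℕ → ℝ := fun x => if x ≤ m + 1 ∧ 0 < q (m + 1 - x) then h x (m + 1 - x) / q (m + 1 - x)
    else 0 with hF'
  have hFnn : ∀ x, 0 ≤ F x := by
    intro x; simp only [hF]; split
    · next hc => exact div_nonneg (hh0 _ _) (le_of_lt hc.2)
    · exact le_refl _
  have hF'nn : ∀ x, 0 ≤ F' x := by
    intro x; simp only [hF']; split
    · next hc => exact div_nonneg (hh0 _ _) (le_of_lt hc.2)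
    · exact le_refl _
  -- expectations as range sums
  have hEm : (∑ ij ∈ Finset.HasAntidiagonal.antidiagonal m, p0 ij.1 * h ij.1 ij.2)
      = ∑ x ∈ range N, π x * F x := by
    rw [antidiag_repr (fun a b => p0 a * h a b) m N (by omega)]
    apply Finset.sum_congr rfl
    intro x _
    simp only [hπ, hF]
    split_ifs with h1 h2 h2
    · have hne := ne_of_gt h2.2
      field_simp
    · have hq0 : q (m - x) = 0 := by
        rcases (hq (m - x)).eq_or_lt with hh | hh
        · exact hh.symm
        · exact absurd ⟨h1, hh⟩ h2
      rw [hhq _ _ hq0, hq0]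
      ring
    · exact absurd h2.1 h1
    · ring
  have hEm1 : (∑ ij ∈ Finset.HasAntidiagonal.antidiagonal (m+1), p0 ij.1 * h ij.1 ij.2)
      = ∑ x ∈ range N, π' x * F' x := by
    rw [antidiag_repr (fun a b => p0 a * h a b) (m+1) N (by omega)]
    apply Finset.sum_congr rfl
    intro x _
    simp only [hπ', hF']
    split_ifs with h1 h2 h2
    · have hne := ne_of_gt h2.2
      field_simp
    · have hq0 : q (m + 1 - x) = 0 := by
        rcases (hq (m + 1 - x)).eq_or_lt with hh | hh
        · exact hh.symm
        · exact absurd ⟨h1, hh⟩ h2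
      rw [hhq _ _ hq0, hq0]
      ring
    · exact absurd h2.1 h1
    · ring
  -- dominance 1 : rm1 * tail(π, t) ≤ rm * tail(π', t)
  have dom1 : ∀ t, rm1 * (∑ y ∈ Ico t N, π y) ≤ rm * (∑ y ∈ Ico t N, π' y) := by
    intro t
    rcases le_or_gt t N with htN | htN
    · have hsplit0 : rm = (∑ y ∈ range t, π y) + ∑ y ∈ Ico t N, π y := by
        rw [hrmr, ← Finset.sum_range_add_sum_Ico π htN]
      have hsplit1 : rm1 = (∑ y ∈ range t, π' y) + ∑ y ∈ Ico t N, π' y := by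
        rw [hrm1r, ← Finset.sum_range_add_sum_Ico π' htN]
      have key : (∑ y ∈ range t, π' y) * (∑ y ∈ Ico t N, π y)
          ≤ (∑ y ∈ range t, π y) * (∑ y ∈ Ico t N, π' y) := by
        rw [Finset.sum_mul_sum, Finset.sum_mul_sum]
        apply Finset.sum_le_sum
        intro w hw
        apply Finset.sum_le_sum
        intro v hv
        rw [mem_range] at hw
        rw [mem_Ico] at hv
        -- π' w * π v ≤ π w * π' v
        by_cases hvm : v ≤ m
        · have hwm : w ≤ m := by omega
          simp only [hπ, hπ']
          rw [if_pos hvm, if_pos hwm, if_pos (by omega : w ≤ m + 1), if_pos (by omega : v ≤ m+1)]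
          have hr := lc_ratio q hq hqlc hqi (m - v) (m - w) (by omega)
          rw [show m - v + 1 = m + 1 - v by omega, show m - w + 1 = m + 1 - w by omega] at hr
          calc p0 w * q (m+1-w) * (p0 v * q (m-v)) = (q (m-v) * q (m+1-w)) * (p0 w * p0 v) := by
                ring
          _ ≤ (q (m+1-v) * q (m-w)) * (p0 w * p0 v) := by
                apply mul_le_mul_of_nonneg_right hr (mul_nonneg (hp0 _) (hp0 _))
          _ = p0 w * q (m-w) * (p0 v * q (m+1-v)) := by ring
        · have hv0 : π v = 0 := if_neg hvm
          rw [hv0, mul_zero]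
          exact mul_nonneg (hπnn _) (hπ'nn _)
      nlinarith [Finset.sum_nonneg fun y (_ : y ∈ Ico t N) => hπnn y,
        Finset.sum_nonneg fun y (_ : y ∈ Ico t N) => hπ'nn y]
    · rw [Finset.Ico_eq_empty (by omega), Finset.sum_empty, Finset.sum_empty, mul_zero, mul_zero]
  -- dominance 2 : rm * tail(π', t+1) ≤ rm1 * tail(π, t)
  have dom2 : ∀ t, rm * (∑ y ∈ Ico (t+1) N, π' y) ≤ rm1 * (∑ y ∈ Ico t N, π y) := by
    intro t
    rcases le_or_gt (t+1) N with htN | htN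
    · have hsplit0 : rm = (∑ y ∈ range t, π y) + ∑ y ∈ Ico t N, π y := by
        rw [hrmr, ← Finset.sum_range_add_sum_Ico π (by omega : t ≤ N)]
      have hsplit1 : rm1 = (∑ y ∈ range (t+1), π' y) + ∑ y ∈ Ico (t+1) N, π' y := by
        rw [hrm1r, ← Finset.sum_range_add_sum_Ico π' htN]
      have key : (∑ y ∈ range t, π y) * (∑ y ∈ Ico (t+1) N, π' y)
          ≤ (∑ y ∈ range (t+1), π' y) * (∑ y ∈ Ico t N, π y) := by
        rw [Finset.sum_mul_sum, Finset.sum_mul_sum]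
        rw [← Finset.sum_product', ← Finset.sum_product']
        set e : ℕ × ℕ → ℕ × ℕ := fun z => (z.1 + 1, z.2 - 1) with he
        calc ∑ z ∈ (range t) ×ˢ (Ico (t+1) N), π z.1 * π' z.2
            ≤ ∑ z ∈ (range t) ×ˢ (Ico (t+1) N), π' (e z).1 * π (e z).2 := by
              apply Finset.sum_le_sum
              intro z hz
              rw [Finset.mem_product, mem_range, mem_Ico] at hz
              obtain ⟨w, v⟩ := z
              obtain ⟨hw, hv1, hv2⟩ := hz
              simp only [he]
              -- π w * π' v ≤ π' (w+1) * π (v-1)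
              by_cases hvm : v ≤ m + 1
              · by_cases hwm : w ≤ m
                · simp only [hπ, hπ']
                  rw [if_pos hwm, if_pos hvm, if_pos (by omega : w + 1 ≤ m + 1),
                    if_pos (by omega : v - 1 ≤ m)]
                  rw [show m + 1 - (w+1) = m - w by omega, show m - (v-1) = m + 1 - v by omega]
                  have hr := lc_ratio p0 hp0 hp0lc hp0i w (v-1) (by omega)
                  rw [show v - 1 + 1 = v by omega] at hr
                  calc p0 w * q (m-w) * (p0 v * q (m+1-v))
                      = (p0 w * p0 v) * (q (m-w) * q (m+1-v)) := by ring
                  _ ≤ (p0 (w+1) * p0 (v-1)) * (q (m-w) * q (m+1-v)) := by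
                        apply mul_le_mul_of_nonneg_right _ (mul_nonneg (hq _) (hq _))
                        linarith
                  _ = p0 (w+1) * q (m-w) * (p0 (v-1) * q (m+1-v)) := by ring
                · have : π w = 0 := if_neg hwm
                  rw [this, zero_mul]
                  exact mul_nonneg (hπ'nn _) (hπnn _)
              · have : π' v = 0 := if_neg hvm
                rw [this, mul_zero]
                exact mul_nonneg (hπ'nn _) (hπnn _)
        _ = ∑ z ∈ ((range t) ×ˢ (Ico (t+1) N)).image e, π' z.1 * π z.2 := by
              rw [Finset.sum_image]
              intro z hz z' hz' hzz
              rw [Finset.mem_coe, Finset.mem_product, mem_range, mem_Ico] at hz hz'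
              simp only [he, Prod.mk.injEq] at hzz
              have : z.1 = z'.1 := by omega
              have h2 : z.2 = z'.2 := by omega
              exact Prod.ext this h2
        _ ≤ ∑ z ∈ (range (t+1)) ×ˢ (Ico t N), π' z.1 * π z.2 := by
              apply Finset.sum_le_sum_of_subset_of_nonneg
              · intro z hz
                rw [Finset.mem_image] at hz
                obtain ⟨z', hz', rfl⟩ := hz
                rw [Finset.mem_product, mem_range, mem_Ico] at hz' ⊢
                simp only [he]
                omega
              · intro z _ _
                exact mul_nonneg (hπ'nn _) (hπnn _)
      nlinarith [Finset.sum_nonneg fun y (_ : y ∈ Ico t N) => hπnn y,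
        Finset.sum_nonneg fun y (_ : y ∈ Ico (t+1) N) => hπ'nn y]
    · rw [Finset.Ico_eq_empty (by omega : ¬ t + 1 < N), Finset.sum_empty, mul_zero]
      exact mul_nonneg hrm1_nn (Finset.sum_nonneg fun y _ => hπnn y)
  -- apply lemB with masses rm1 * π and rm * π'
  rw [hEm, hEm1]
  have main : ∑ x ∈ range N, (rm1 * π x) * F x ≤ ∑ x ∈ range N, (rm * π' x) * F' x := by
    apply lemB N (fun x => rm1 * π x) (fun x => rm * π' x) F F'
    · rw [← Finset.mul_sum, ← Finset.mul_sum, ← hrmr, ← hrm1r]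
      ring
    · -- h1
      intro x
      simp only [← Finset.mul_sum]
      by_cases hcase : x ≤ m ∧ 0 < q (m - x)
      · obtain ⟨hxm, hqx⟩ := hcase
        by_cases hqx1 : 0 < q (m + 1 - x)
        · -- both positive: coefficient ≥ 0 by dom2, F' x ≥ F x by hcross
          apply mul_nonneg
          · have := dom2 x
            linarith
          · simp only [hF, hF']
            rw [if_pos (show x ≤ m ∧ 0 < q (m - x) from ⟨hxm, hqx⟩),
              if_pos (show x ≤ m + 1 ∧ 0 < q (m + 1 - x) from ⟨by omega, hqx1⟩)]
            rw [sub_nonneg, div_le_div_iff₀ hqx hqx1]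
            have := hcross x (m - x)
            rw [show m - x + 1 = m + 1 - x by omega] at this
            linarith
        · -- degenerate: coefficient = 0
          have hq1 : q (m + 1 - x) = 0 := le_antisymm (not_lt.1 hqx1) (hq _)
          have htail0 : ∑ y ∈ Ico x N, π y = rm := by
            rw [hrmr, ← Finset.sum_range_add_sum_Ico π (by omega : x ≤ N)]
            have : ∑ y ∈ range x, π y = 0 := by
              apply Finset.sum_eq_zero
              intro y hy
              rw [mem_range] at hy
              simp only [hπ]
              rw [if_pos (by omega : y ≤ m)]
              have : q (m - y) = 0 := by
                by_contra hc
                have hpos := lt_of_le_of_ne (hq _) (Ne.symm hc)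
                exact absurd (hqi (m - y) (m + 1 - x) (by omega) hpos) (by rw [hq1]; simp)
              rw [this, mul_zero]
            rw [this, zero_add]
          have htail1 : ∑ y ∈ Ico (x+1) N, π' y = rm1 := by
            rw [hrm1r, ← Finset.sum_range_add_sum_Ico π' (by omega : x + 1 ≤ N)]
            have : ∑ y ∈ range (x+1), π' y = 0 := by
              apply Finset.sum_eq_zero
              intro y hy
              rw [mem_range] at hy
              simp only [hπ']
              rw [if_pos (by omega : y ≤ m + 1)]
              have : q (m + 1 - y) = 0 := by
                by_contra hc
                have hpos := lt_of_le_of_ne (hq _) (Ne.symm hc)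
                exact absurd (hqi (m + 1 - y) (m + 1 - x) (by omega) hpos) (by rw [hq1]; simp)
              rw [this, mul_zero]
            rw [this, zero_add]
          rw [htail0, htail1]
          rw [show rm1 * rm - rm * rm1 = 0 by ring, zero_mul]
      · -- F x = 0
        have hFx : F x = 0 := by simp only [hF]; rw [if_neg hcase]
        rw [hFx, sub_zero]
        apply mul_nonneg
        · have := dom2 x
          linarith
        · exact hF'nn x
    · -- h2
      intro x
      simp only [← Finset.mul_sum]
      apply mul_nonneg
      · have := dom1 (x+1)
        linarith
      · by_cases hcase : x ≤ m ∧ 0 < q (m - x)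
        · obtain ⟨hxm, hqx⟩ := hcase
          simp only [hF, hF']
          rw [if_pos (show x ≤ m ∧ 0 < q (m - x) from ⟨hxm, hqx⟩),
            if_pos (show x + 1 ≤ m + 1 ∧ 0 < q (m + 1 - (x+1)) by
              refine ⟨by omega, ?_⟩
              rw [show m + 1 - (x+1) = m - x by omega]; exact hqx)]
          rw [show m + 1 - (x+1) = m - x by omega]
          rw [sub_nonneg, div_le_div_iff₀ hqx hqx]
          exact mul_le_mul_of_nonneg_right (hmono x (m - x)) (le_of_lt hqx)
        · have hFx : F x = 0 := by simp only [hF]; rw [if_neg hcase]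
          rw [hFx, sub_zero]
          exact hF'nn _
  calc (∑ x ∈ range N, π x * F x) * rm1 = ∑ x ∈ range N, (rm1 * π x) * F x := by
        rw [Finset.sum_mul]; exact Finset.sum_congr rfl fun x _ => by ring
  _ ≤ ∑ x ∈ range N, (rm * π' x) * F' x := main
  _ = (∑ x ∈ range N, π' x * F' x) * rm := by
        rw [Finset.sum_mul]; exact Finset.sum_congr rfl fun x _ => by ring
end twovar
-- ====================== new content ======================

lemma condZ_nonneg (L n : ℕ) (p : Fin L → ℕ → ℝ) (hp0 : ∀ i s, 0 ≤ p i s) :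
    0 ≤ condZ L n p :=
  Finset.sum_nonneg fun k _ => Finset.prod_nonneg fun i _ => hp0 i (k i)

lemma ES_nonneg (L n : ℕ) (p : Fin L → ℕ → ℝ) (f : (Fin L → ℕ) → ℝ)
    (hp0 : ∀ i s, 0 ≤ p i s) (hf : ∀ k, 0 ≤ f k) : 0 ≤ ES L n p f :=
  Finset.sum_nonneg fun k _ =>
    mul_nonneg (Finset.prod_nonneg fun i _ => hp0 i (k i)) (hf k)

lemma ES_zero_of_condZ_zero (L n : ℕ) (p : Fin L → ℕ → ℝ) (f : (Fin L → ℕ) → ℝ)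
    (hp0 : ∀ i s, 0 ≤ p i s) (hZ : condZ L n p = 0) : ES L n p f = 0 := by
  unfold ES
  apply Finset.sum_eq_zero
  intro k hk
  have hall := (Finset.sum_eq_zero_iff_of_nonneg
    (fun k _ => Finset.prod_nonneg fun i _ => hp0 i (k i))).1 hZ
  rw [hall k hk, zero_mul]

lemma condZ_succ (L n : ℕ) (p : Fin (L+1) → ℕ → ℝ) :
    condZ (L+1) n p = myconv (p 0) (fun s => condZ L s (fun i => p i.succ)) n := by
  rw [condZ_eq_ES, ES_succ, myconv]
  apply Finset.sum_congr rfl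
  intro ij _
  rw [condZ_eq_ES]

lemma condZ_L0 (n : ℕ) (p : Fin 0 → ℕ → ℝ) :
    condZ 0 n p = if n = 0 then 1 else 0 := by
  cases n with
  | zero => simp [condZ]
  | succ n => simp [condZ]

lemma condZ_interval (L : ℕ) (p : Fin L → ℕ → ℝ)
    (hp0 : ∀ i s, 0 ≤ p i s)
    (hint : ∀ i, ∀ s t : ℕ, t ≤ s → 0 < p i s → 0 < p i t) :
    ∀ n t : ℕ, t ≤ n → 0 < condZ L n p → 0 < condZ L t p := by
  induction L with
  | zero =>
    intro n t htn hn
    rw [condZ_L0] at hn ⊢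
    rcases Nat.eq_zero_or_pos n with rfl | hpos
    · have ht : t = 0 := by omega
      rw [ht]; norm_num
    · rw [if_neg (by omega)] at hn; linarith
  | succ L ih =>
    intro n t htn hn
    rw [condZ_succ] at hn ⊢
    exact myconv_interval _ _ (hp0 0) (fun s => condZ_nonneg L s _ (fun i s => hp0 i.succ s))
      (hint 0) (ih (fun i => p i.succ) (fun i s => hp0 i.succ s)
        (fun i => hint i.succ) |> fun H s t hts hs => H s t hts hs) n t htn hn

lemma condZ_lc (L : ℕ) (p : Fin L → ℕ → ℝ)
    (hp0 : ∀ i s, 0 ≤ p i s)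
    (hlc : ∀ i, ∀ s : ℕ, 1 ≤ s → p i s ^ 2 ≥ p i (s - 1) * p i (s + 1))
    (hint : ∀ i, ∀ s t : ℕ, t ≤ s → 0 < p i s → 0 < p i t) :
    ∀ n : ℕ, 1 ≤ n → condZ L n p ^ 2 ≥ condZ L (n - 1) p * condZ L (n + 1) p := by
  induction L with
  | zero =>
    intro n hn
    rw [condZ_L0, condZ_L0, condZ_L0, if_neg (show ¬ n = 0 by omega),
      if_neg (show ¬ n + 1 = 0 by omega)]
    simp
  | succ L ih =>
    intro n hn
    rw [condZ_succ, condZ_succ, condZ_succ]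
    exact myconv_lc _ _ (hp0 0) (fun s => condZ_nonneg L s _ (fun i s => hp0 i.succ s))
      (hlc 0) (ih (fun i => p i.succ) (fun i s => hp0 i.succ s) (fun i => hlc i.succ)
        (fun i => hint i.succ))
      (hint 0) (condZ_interval L _ (fun i s => hp0 i.succ s) (fun i => hint i.succ)
        |> fun H s t hts hs => H s t hts hs) n hn

lemma efron_step (L : ℕ) (p : Fin L → ℕ → ℝ)
    (hp0 : ∀ i s, 0 ≤ p i s)
    (hlc : ∀ i, ∀ s : ℕ, 1 ≤ s → p i s ^ 2 ≥ p i (s - 1) * p i (s + 1))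
    (hint : ∀ i, ∀ s t : ℕ, t ≤ s → 0 < p i s → 0 < p i t)
    (f : (Fin L → ℕ) → ℝ) (hfm : Monotone f) (hf0 : ∀ k, 0 ≤ f k) :
    ∀ m : ℕ, ES L m p f * condZ L (m+1) p ≤ ES L (m+1) p f * condZ L m p := by
  induction L with
  | zero =>
    intro m
    have h1 : condZ 0 (m+1) p = 0 := by rw [condZ_L0, if_neg (by omega)]
    have h2 : ES 0 (m+1) p f = 0 := by
      unfold ES
      rw [Finset.Nat.antidiagonalTuple_zero_succ, Finset.sum_empty]
    rw [h1, h2, mul_zero, zero_mul]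
  | succ L ih =>
    intro m
    set p' : Fin L → ℕ → ℝ := fun i => p i.succ with hp'
    set q : ℕ → ℝ := fun s => condZ L s p' with hqdef
    set h : ℕ → ℕ → ℝ := fun v s => ES L s p' (fun k => f (Fin.cons v k)) with hhdef
    have hrw : ∀ j, ES (L+1) j p f = ∑ ij ∈ Finset.HasAntidiagonal.antidiagonal j, p 0 ij.1 * h ij.1 ij.2 :=
      fun j => ES_succ L j p f
    have hrwZ : ∀ j, condZ (L+1) j p = ∑ ij ∈ Finset.HasAntidiagonal.antidiagonal j, p 0 ij.1 * q ij.2 :=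
      fun j => by rw [condZ_succ]; rfl
    rw [hrw, hrw, hrwZ, hrwZ]
    apply twovar
    · exact hp0 0
    · exact fun s => condZ_nonneg L s p' (fun i s => hp0 i.succ s)
    · exact hlc 0
    · exact fun s hs => condZ_lc L p' (fun i s => hp0 i.succ s) (fun i => hlc i.succ)
        (fun i => hint i.succ) s hs
    · exact hint 0
    · exact fun s t hts hs => condZ_interval L p' (fun i s => hp0 i.succ s)
        (fun i => hint i.succ) s t hts hs
    · intro v s
      exact ES_nonneg L s p' _ (fun i s => hp0 i.succ s) (fun k => hf0 _)
    · intro v s hq0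
      exact ES_zero_of_condZ_zero L s p' _ (fun i s => hp0 i.succ s) hq0
    · intro v s
      apply Finset.sum_le_sum
      intro k _
      apply mul_le_mul_of_nonneg_left _ (Finset.prod_nonneg fun i _ => hp0 i.succ (k i))
      apply hfm
      intro i
      refine Fin.cases ?_ ?_ i
      · simp [Fin.cons_zero]
      · intro j
        simp [Fin.cons_succ]
    · intro v s
      exact ih p' (fun i s => hp0 i.succ s) (fun i => hlc i.succ) (fun i => hint i.succ)
        (fun k => f (Fin.cons v k))
        (fun k k' hkk => hfm (by
          intro i
          refine Fin.cases ?_ ?_ i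
          · simp [Fin.cons_zero]
          · intro j
            simp only [Fin.cons_succ]
            exact hkk j))
        (fun k => hf0 _) s

lemma efron_chain (L : ℕ) (p : Fin L → ℕ → ℝ)
    (hp0 : ∀ i s, 0 ≤ p i s)
    (hlc : ∀ i, ∀ s : ℕ, 1 ≤ s → p i s ^ 2 ≥ p i (s - 1) * p i (s + 1))
    (hint : ∀ i, ∀ s t : ℕ, t ≤ s → 0 < p i s → 0 < p i t)
    (f : (Fin L → ℕ) → ℝ) (hfm : Monotone f) (hf0 : ∀ k, 0 ≤ f k) :
    ∀ s t : ℕ, s ≤ t → ES L s p f * condZ L t p ≤ ES L t p f * condZ L s p := by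
  intro s t hst
  induction t, hst using Nat.le_induction with
  | base => exact le_refl _
  | succ t hst ihh =>
    rcases (condZ_nonneg L t p hp0).eq_or_lt with hZt | hZt
    · have hZt1 : condZ L (t+1) p = 0 := by
        rcases (condZ_nonneg L (t+1) p hp0).eq_or_lt with h | h
        · exact h.symm
        · exact absurd (condZ_interval L p hp0 hint (t+1) t (by omega) h)
            (by rw [← hZt]; exact lt_irrefl _)
      rw [hZt1, mul_zero]
      exact mul_nonneg (ES_nonneg L (t+1) p f hp0 hf0) (condZ_nonneg L s p hp0)
    · have hstep := efron_step L p hp0 hlc hint f hfm hf0 t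
      have h3 : condZ L t p * (ES L s p f * condZ L (t+1) p)
          ≤ condZ L t p * (ES L (t+1) p f * condZ L s p) := by
        have e1 : condZ L t p * (ES L s p f * condZ L (t+1) p)
            = (ES L s p f * condZ L t p) * condZ L (t+1) p := by ring
        have e2 : condZ L t p * (ES L (t+1) p f * condZ L s p)
            = (ES L (t+1) p f * condZ L t p) * condZ L s p := by ring
        rw [e1, e2]
        calc (ES L s p f * condZ L t p) * condZ L (t+1) p
            ≤ (ES L t p f * condZ L s p) * condZ L (t+1) p :=
              mul_le_mul_of_nonneg_right ihh (condZ_nonneg L (t+1) p hp0)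
        _ = (ES L t p f * condZ L (t+1) p) * condZ L s p := by ring
        _ ≤ (ES L (t+1) p f * condZ L t p) * condZ L s p :=
              mul_le_mul_of_nonneg_right hstep (condZ_nonneg L s p hp0)
        _ = (ES L (t+1) p f * condZ L t p) * condZ L s p := rfl
      exact le_of_mul_le_mul_left h3 hZt
-- ==================== new stuff ====================

/-- point mass at 0 -/
noncomputable def dz : ℕ → ℝ := fun s => if s = 0 then 1 else 0

lemma dz_nonneg : ∀ s, 0 ≤ dz s := by
  intro s; unfold dz; split <;> norm_num

lemma dz_lc : ∀ s : ℕ, 1 ≤ s → dz s ^ 2 ≥ dz (s - 1) * dz (s + 1) := by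
  intro s hs
  unfold dz
  rw [if_neg (by omega : ¬ s + 1 = 0), mul_zero]
  positivity

lemma dz_int : ∀ s t : ℕ, t ≤ s → 0 < dz s → 0 < dz t := by
  intro s t hts hs
  unfold dz at *
  split at hs
  · next h => rw [if_pos (by omega)]; norm_num
  · norm_num at hs

section split
variable (ℓ : ℕ) (p : Fin ℓ → ℕ → ℝ) (A : Finset (Fin ℓ))

lemma prod_split (a b : Fin ℓ → ℕ) (ha : ∀ i ∉ A, a i = 0) (hb : ∀ i ∈ A, b i = 0) :
    (∏ i, p i (a i + b i))
      = (∏ i, (if i ∈ A then p i else dz) (a i)) *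
        (∏ i, (if i ∈ A then dz else p i) (b i)) := by
  rw [← Finset.prod_mul_distrib]
  apply Finset.prod_congr rfl
  intro i _
  by_cases hiA : i ∈ A
  · rw [hb i hiA, if_pos hiA, if_pos hiA]
    simp [dz]
  · rw [ha i hiA, if_neg hiA, if_neg hiA]
    simp [dz]


lemma wA_zero (a : Fin ℓ → ℕ) (hna : ¬ ∀ i ∉ A, a i = 0) :
    (∏ i, (if i ∈ A then p i else dz) (a i)) = 0 := by
  push_neg at hna
  obtain ⟨i, hiA, hai⟩ := hna
  apply Finset.prod_eq_zero (Finset.mem_univ i)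
  rw [if_neg hiA]
  unfold dz
  rw [if_neg hai]

lemma wC_zero (b : Fin ℓ → ℕ) (hnb : ¬ ∀ i ∈ A, b i = 0) :
    (∏ i, (if i ∈ A then dz else p i) (b i)) = 0 := by
  push_neg at hnb
  obtain ⟨i, hiA, hbi⟩ := hnb
  apply Finset.prod_eq_zero (Finset.mem_univ i)
  rw [if_pos hiA]
  unfold dz
  rw [if_neg hbi]

lemma ES_fact (n : ℕ) (φ : (Fin ℓ → ℕ) → ℝ) :
    ES ℓ n p φ = ∑ st ∈ Finset.HasAntidiagonal.antidiagonal n,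
      ∑ a ∈ Finset.Nat.antidiagonalTuple ℓ st.1,
        ∑ b ∈ Finset.Nat.antidiagonalTuple ℓ st.2,
          (∏ i, (if i ∈ A then p i else dz) (a i)) *
          (∏ i, (if i ∈ A then dz else p i) (b i)) * φ (a + b) := by
  classical
  have hinner : ∀ (s : ℕ) (a : Fin ℓ → ℕ),
      (∑ b ∈ Finset.Nat.antidiagonalTuple ℓ s,
          (∏ i, (if i ∈ A then p i else dz) (a i)) *
          (∏ i, (if i ∈ A then dz else p i) (b i)) * φ (a + b))
      = ∑ b ∈ (Finset.Nat.antidiagonalTuple ℓ s).filter (fun b => ∀ i ∈ A, b i = 0),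
          (∏ i, (if i ∈ A then p i else dz) (a i)) *
          (∏ i, (if i ∈ A then dz else p i) (b i)) * φ (a + b) := by
    intro s a
    refine (Finset.sum_subset (Finset.filter_subset _ _) ?_).symm
    intro b hbmem hb
    rw [Finset.mem_filter, not_and] at hb
    rw [wC_zero ℓ p A b (hb hbmem), mul_zero, zero_mul]
  have houter : ∀ (st : ℕ × ℕ),
      (∑ a ∈ Finset.Nat.antidiagonalTuple ℓ st.1,
        ∑ b ∈ (Finset.Nat.antidiagonalTuple ℓ st.2).filter (fun b => ∀ i ∈ A, b i = 0),
          (∏ i, (if i ∈ A then p i else dz) (a i)) *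
          (∏ i, (if i ∈ A then dz else p i) (b i)) * φ (a + b))
      = ∑ a ∈ (Finset.Nat.antidiagonalTuple ℓ st.1).filter (fun a => ∀ i ∉ A, a i = 0),
        ∑ b ∈ (Finset.Nat.antidiagonalTuple ℓ st.2).filter (fun b => ∀ i ∈ A, b i = 0),
          (∏ i, (if i ∈ A then p i else dz) (a i)) *
          (∏ i, (if i ∈ A then dz else p i) (b i)) * φ (a + b) := by
    intro st
    refine (Finset.sum_subset (Finset.filter_subset _ _) ?_).symm
    intro a hamem ha
    rw [Finset.mem_filter, not_and] at ha
    apply Finset.sum_eq_zero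
    intro b _
    rw [wA_zero ℓ p A a (ha hamem), zero_mul, zero_mul]
  rw [Finset.sum_congr rfl (fun st (_ : st ∈ Finset.HasAntidiagonal.antidiagonal n) => by
    rw [Finset.sum_congr rfl (fun a _ => hinner st.2 a), houter st])]
  -- now the bijection
  have hconv : ∀ st : ℕ × ℕ,
      (∑ a ∈ (Finset.Nat.antidiagonalTuple ℓ st.1).filter (fun a => ∀ i ∉ A, a i = 0),
        ∑ b ∈ (Finset.Nat.antidiagonalTuple ℓ st.2).filter (fun b => ∀ i ∈ A, b i = 0),
          (∏ i, (if i ∈ A then p i else dz) (a i)) *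
          (∏ i, (if i ∈ A then dz else p i) (b i)) * φ (a + b))
      = ∑ z ∈ ((Finset.Nat.antidiagonalTuple ℓ st.1).filter (fun a => ∀ i ∉ A, a i = 0)) ×ˢ
            ((Finset.Nat.antidiagonalTuple ℓ st.2).filter (fun b => ∀ i ∈ A, b i = 0)),
          (∏ i, (if i ∈ A then p i else dz) (z.1 i)) *
          (∏ i, (if i ∈ A then dz else p i) (z.2 i)) * φ (z.1 + z.2) := by
    intro st
    rw [Finset.sum_product]
  rw [Finset.sum_congr rfl (fun st (_ : st ∈ Finset.HasAntidiagonal.antidiagonal n) => hconv st)]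
  rw [Finset.sum_sigma']
  unfold ES
  symm
  apply Finset.sum_nbij'
    (i := fun (x : (_ : ℕ × ℕ) × ((Fin ℓ → ℕ) × (Fin ℓ → ℕ))) => x.2.1 + x.2.2)
    (j := fun (k : Fin ℓ → ℕ) =>
      ⟨(∑ i ∈ A, k i, ∑ i ∈ Aᶜ, k i),
        ((fun i => if i ∈ A then k i else 0), (fun i => if i ∈ A then 0 else k i))⟩)
  · rintro ⟨⟨s, t⟩, a, b⟩ hx
    simp only [Finset.mem_sigma, Finset.HasAntidiagonal.mem_antidiagonal, Finset.mem_product,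
      Finset.mem_filter, Finset.Nat.mem_antidiagonalTuple] at hx ⊢
    obtain ⟨hst, ⟨hsa, _⟩, ⟨hsb, _⟩⟩ := hx
    simp only [Pi.add_apply]
    rw [Finset.sum_add_distrib, hsa, hsb]
    exact hst
  · intro k hk
    rw [Finset.Nat.mem_antidiagonalTuple] at hk
    simp only [Finset.mem_sigma, Finset.HasAntidiagonal.mem_antidiagonal, Finset.mem_product,
      Finset.mem_filter, Finset.Nat.mem_antidiagonalTuple]
    refine ⟨?_, ⟨?_, ?_⟩, ⟨?_, ?_⟩⟩
    · rw [← hk]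
      exact Finset.sum_add_sum_compl A k
    · rw [Finset.sum_ite_mem, Finset.univ_inter]
    · intro i hiA
      rw [if_neg hiA]
    · have : (fun i => if i ∈ A then 0 else k i) = (fun i => if i ∈ Aᶜ then k i else 0) := by
        funext i
        by_cases hiA : i ∈ A <;> simp [hiA]
      rw [this, Finset.sum_ite_mem, Finset.univ_inter]
    · intro i hiA
      rw [if_pos hiA]
  · rintro ⟨⟨s, t⟩, a, b⟩ hx
    simp only [Finset.mem_sigma, Finset.HasAntidiagonal.mem_antidiagonal, Finset.mem_product,
      Finset.mem_filter, Finset.Nat.mem_antidiagonalTuple] at hx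
    obtain ⟨hst, ⟨hsa, hsupa⟩, ⟨hsb, hsupb⟩⟩ := hx
    have e1 : (∑ i ∈ A, (a + b) i) = s := by
      rw [← hsa]
      have h1 : ∑ i ∈ A, (a + b) i = ∑ i ∈ A, a i := by
        apply Finset.sum_congr rfl
        intro i hi
        simp only [Pi.add_apply, hsupb i hi, add_zero]
      rw [h1]
      have h2 : ∑ i : Fin ℓ, a i = ∑ i ∈ A, a i + ∑ i ∈ Aᶜ, a i :=
        (Finset.sum_add_sum_compl A a).symm
      have h3 : ∑ i ∈ Aᶜ, a i = 0 := by
        apply Finset.sum_eq_zero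
        intro i hi
        exact hsupa i (Finset.mem_compl.1 hi)
      omega
    have e2 : (∑ i ∈ Aᶜ, (a + b) i) = t := by
      rw [← hsb]
      have h1 : ∑ i ∈ Aᶜ, (a + b) i = ∑ i ∈ Aᶜ, b i := by
        apply Finset.sum_congr rfl
        intro i hi
        simp only [Pi.add_apply, hsupa i (Finset.mem_compl.1 hi), zero_add]
      rw [h1]
      have h2 : ∑ i : Fin ℓ, b i = ∑ i ∈ A, b i + ∑ i ∈ Aᶜ, b i :=
        (Finset.sum_add_sum_compl A b).symm
      have h3 : ∑ i ∈ A, b i = 0 := Finset.sum_eq_zero hsupb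
      omega
    have e3 : (fun i => if i ∈ A then (a + b) i else 0) = a := by
      funext i
      by_cases hiA : i ∈ A
      · rw [if_pos hiA]
        simp [Pi.add_apply, hsupb i hiA]
      · rw [if_neg hiA, hsupa i hiA]
    have e4 : (fun i => if i ∈ A then 0 else (a + b) i) = b := by
      funext i
      by_cases hiA : i ∈ A
      · rw [if_pos hiA, hsupb i hiA]
      · rw [if_neg hiA]
        simp [Pi.add_apply, hsupa i hiA]
    rw [e1, e2, e3, e4]
  · intro k hk
    funext i
    by_cases hiA : i ∈ A <;> simp [hiA]
  · rintro ⟨⟨s, t⟩, a, b⟩ hx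
    simp only [Finset.mem_sigma, Finset.HasAntidiagonal.mem_antidiagonal, Finset.mem_product,
      Finset.mem_filter, Finset.Nat.mem_antidiagonalTuple] at hx
    obtain ⟨hst, ⟨hsa, hsupa⟩, ⟨hsb, hsupb⟩⟩ := hx
    simp only
    rw [show (∏ i, p i ((a + b) i)) = ∏ i, p i (a i + b i) from rfl]
    rw [prod_split ℓ p A a b hsupa hsupb]

/-- expectation splits into a product over the antidiagonal -/
lemma ES_split (n : ℕ) (f g : (Fin ℓ → ℕ) → ℝ)
    (hfA : ∀ k k' : Fin ℓ → ℕ, (∀ i ∈ A, k i = k' i) → f k = f k')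
    (hgC : ∀ k k' : Fin ℓ → ℕ, (∀ i ∉ A, k i = k' i) → g k = g k') :
    ES ℓ n p (fun k => f k * g k)
      = ∑ st ∈ Finset.HasAntidiagonal.antidiagonal n,
          ES ℓ st.1 (fun i => if i ∈ A then p i else dz) f *
          ES ℓ st.2 (fun i => if i ∈ A then dz else p i) g := by
  classical
  rw [ES_fact ℓ p A n (fun k => f k * g k)]
  apply Finset.sum_congr rfl
  intro st _
  unfold ES
  rw [Finset.sum_mul_sum]
  apply Finset.sum_congr rfl
  intro a _
  apply Finset.sum_congr rfl
  intro b _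
  by_cases hwa : (∏ i, (if i ∈ A then p i else dz) (a i)) = 0
  · rw [hwa]; ring
  · by_cases hwb : (∏ i, (if i ∈ A then dz else p i) (b i)) = 0
    · rw [hwb]; ring
    · have hsupa : ∀ i ∉ A, a i = 0 := by
        by_contra hcon
        exact hwa (wA_zero ℓ p A a hcon)
      have hsupb : ∀ i ∈ A, b i = 0 := by
        by_contra hcon
        exact hwb (wC_zero ℓ p A b hcon)
      have hfe : f (a + b) = f a := by
        apply hfA
        intro i hiA
        simp [Pi.add_apply, hsupb i hiA]
      have hge : g (a + b) = g b := by
        apply hgC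
        intro i hiA
        simp [Pi.add_apply, hsupa i hiA]
      rw [hfe, hge]
      ring

lemma ES_expand (L n : ℕ) (p : Fin L → ℕ → ℝ) (f g : (Fin L → ℕ) → ℝ) (Cf Cg : ℝ) :
    ES L n p (fun k => (f k + Cf) * (g k + Cg))
      = ES L n p (fun k => f k * g k) + Cg * ES L n p f + Cf * ES L n p g
        + (Cf * Cg) * condZ L n p := by
  unfold ES condZ
  rw [Finset.sum_congr rfl (fun k (_ : k ∈ Finset.Nat.antidiagonalTuple L n) =>
    show (∏ i, p i (k i)) * ((f k + Cf) * (g k + Cg))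
       = (∏ i, p i (k i)) * (f k * g k) + Cg * ((∏ i, p i (k i)) * f k)
         + Cf * ((∏ i, p i (k i)) * g k) + (Cf * Cg) * (∏ i, p i (k i)) by ring)]
  rw [Finset.sum_add_distrib, Finset.sum_add_distrib, Finset.sum_add_distrib,
    ← Finset.mul_sum, ← Finset.mul_sum, ← Finset.mul_sum]

lemma ES_add_const (L n : ℕ) (p : Fin L → ℕ → ℝ) (f : (Fin L → ℕ) → ℝ) (C : ℝ) :
    ES L n p (fun k => f k + C) = ES L n p f + C * condZ L n p := by
  unfold ES condZ
  rw [Finset.sum_congr rfl (fun k (_ : k ∈ Finset.Nat.antidiagonalTuple L n) =>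
    show (∏ i, p i (k i)) * (f k + C)
       = (∏ i, p i (k i)) * f k + C * (∏ i, p i (k i)) by ring)]
  rw [Finset.sum_add_distrib, ← Finset.mul_sum]

lemma condExp_eq (L n : ℕ) (p : Fin L → ℕ → ℝ) (h : (Fin L → ℕ) → ℝ) :
    condExp L n p h = ES L n p h / condZ L n p := by
  unfold condExp ES
  rw [Finset.sum_div]
  exact Finset.sum_congr rfl fun k _ => by rw [div_mul_eq_mul_div]

/-- Chebyshev-type pairing over the antidiagonal -/
lemma cheb (n : ℕ) (a b za zc : ℕ → ℝ)
    (h1 : ∀ s t, s ≤ t → a s * za t ≤ a t * za s)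
    (h2 : ∀ s t, s ≤ t → b s * zc t ≤ b t * zc s) :
    (∑ u ∈ Finset.HasAntidiagonal.antidiagonal n, a u.1 * b u.2) *
      (∑ u ∈ Finset.HasAntidiagonal.antidiagonal n, za u.1 * zc u.2)
      ≤ (∑ u ∈ Finset.HasAntidiagonal.antidiagonal n, a u.1 * zc u.2) *
        (∑ u ∈ Finset.HasAntidiagonal.antidiagonal n, za u.1 * b u.2) := by
  set D := Finset.HasAntidiagonal.antidiagonal n with hD
  set T : ℕ × ℕ → ℕ × ℕ → ℝ := fun u u' =>
    a u.1 * zc u.2 * (za u'.1 * b u'.2) - a u.1 * b u.2 * (za u'.1 * zc u'.2) with hT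
  have expand : (∑ u ∈ D, a u.1 * zc u.2) * (∑ u ∈ D, za u.1 * b u.2)
      - (∑ u ∈ D, a u.1 * b u.2) * (∑ u ∈ D, za u.1 * zc u.2)
      = ∑ u ∈ D, ∑ u' ∈ D, T u u' := by
    rw [Finset.sum_mul_sum, Finset.sum_mul_sum, ← Finset.sum_sub_distrib]
    exact Finset.sum_congr rfl fun u _ => by rw [← Finset.sum_sub_distrib]
  have swap : ∑ u ∈ D, ∑ u' ∈ D, T u u' = ∑ u ∈ D, ∑ u' ∈ D, T u' u := Finset.sum_comm
  have twice : 2 * (∑ u ∈ D, ∑ u' ∈ D, T u u') = ∑ u ∈ D, ∑ u' ∈ D, (T u u' + T u' u) := by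
    rw [two_mul]
    nth_rewrite 2 [swap]
    rw [← Finset.sum_add_distrib]
    exact Finset.sum_congr rfl fun u _ => by rw [← Finset.sum_add_distrib]
  have key : ∀ u ∈ D, ∀ u' ∈ D, 0 ≤ T u u' + T u' u := by
    intro u hu u' hu'
    rw [hD, Finset.HasAntidiagonal.mem_antidiagonal] at hu hu'
    have factored : T u u' + T u' u
        = (a u.1 * za u'.1 - a u'.1 * za u.1) * (zc u.2 * b u'.2 - zc u'.2 * b u.2) := by
      simp only [hT]; ring
    rw [factored]
    rcases le_total u.1 u'.1 with hle | hle
    · have h2le : u'.2 ≤ u.2 := by omega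
      have f1 : a u.1 * za u'.1 - a u'.1 * za u.1 ≤ 0 := by
        have := h1 u.1 u'.1 hle; linarith
      have f2 : zc u.2 * b u'.2 - zc u'.2 * b u.2 ≤ 0 := by
        have := h2 u'.2 u.2 h2le; linarith
      have := mul_nonneg (neg_nonneg.2 f1) (neg_nonneg.2 f2)
      rw [neg_mul_neg] at this
      exact this
    · have h2le : u.2 ≤ u'.2 := by omega
      have f1 : 0 ≤ a u.1 * za u'.1 - a u'.1 * za u.1 := by
        have := h1 u'.1 u.1 hle; linarith
      have f2 : 0 ≤ zc u.2 * b u'.2 - zc u'.2 * b u.2 := by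
        have := h2 u.2 u'.2 h2le; linarith
      exact mul_nonneg f1 f2
  have pos : 0 ≤ ∑ u ∈ D, ∑ u' ∈ D, (T u u' + T u' u) :=
    Finset.sum_nonneg fun u hu => Finset.sum_nonneg fun u' hu' => key u hu u' hu'
  nlinarith [expand, twice, pos]

/-- if `V₁,…,V_ℓ` are independent `ℤ₊`-valued log-concave random variables,
each with interval support containing `0`, and `P(S_ℓ = n) > 0`, then the conditional
family `(W₁,…,W_ℓ) ∼ (V₁,…,V_ℓ) | S_ℓ = n` is negatively associated: for disjoint
`A, B ⊆ {1,…,ℓ}` and bounded coordinatewise nondecreasing `f` (depending only on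
coordinates in `A`) and `g` (depending only on coordinates in `B`),
`Cov(f(W), g(W)) ≤ 0`. -/
theorem stmt4 (ℓ n : ℕ) (p : Fin ℓ → ℕ → ℝ)
    (hp0 : ∀ i s, 0 ≤ p i s) (hp1 : ∀ i, ∑' s, p i s = 1)
    (hlc : ∀ i, ∀ s : ℕ, 1 ≤ s → p i s ^ 2 ≥ p i (s - 1) * p i (s + 1))
    (hzero : ∀ i, 0 < p i 0)
    (hint : ∀ i, ∀ s t : ℕ, t ≤ s → 0 < p i s → 0 < p i t)
    (hZ : 0 < condZ ℓ n p) :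
    ∀ A B : Finset (Fin ℓ), Disjoint A B →
      ∀ f g : (Fin ℓ → ℕ) → ℝ, Monotone f → Monotone g →
        (∃ Cf, ∀ k, |f k| ≤ Cf) → (∃ Cg, ∀ k, |g k| ≤ Cg) →
        (∀ k k' : Fin ℓ → ℕ, (∀ i ∈ A, k i = k' i) → f k = f k') →
        (∀ k k' : Fin ℓ → ℕ, (∀ j ∈ B, k j = k' j) → g k = g k') →
        condExp ℓ n p (fun k => f k * g k) - condExp ℓ n p f * condExp ℓ n p g ≤ 0 := by
  intro A B hAB f g hfm hgm hbf hbg hfA hgB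
  classical
  obtain ⟨Cf, hCf⟩ := hbf
  obtain ⟨Cg, hCg⟩ := hbg
  set pA : Fin ℓ → ℕ → ℝ := fun i => if i ∈ A then p i else dz with hpA
  set pC : Fin ℓ → ℕ → ℝ := fun i => if i ∈ A then dz else p i with hpC
  have hp0A : ∀ i s, 0 ≤ pA i s := by
    intro i s; simp only [hpA]; split
    · exact hp0 i s
    · exact dz_nonneg s
  have hlcA : ∀ i, ∀ s : ℕ, 1 ≤ s → pA i s ^ 2 ≥ pA i (s - 1) * pA i (s + 1) := by
    intro i s hs; simp only [hpA]; split
    · exact hlc i s hs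
    · exact dz_lc s hs
  have hintA : ∀ i, ∀ s t : ℕ, t ≤ s → 0 < pA i s → 0 < pA i t := by
    intro i s t hts; simp only [hpA]; split
    · exact hint i s t hts
    · exact dz_int s t hts
  have hp0C : ∀ i s, 0 ≤ pC i s := by
    intro i s; simp only [hpC]; split
    · exact dz_nonneg s
    · exact hp0 i s
  have hlcC : ∀ i, ∀ s : ℕ, 1 ≤ s → pC i s ^ 2 ≥ pC i (s - 1) * pC i (s + 1) := by
    intro i s hs; simp only [hpC]; split
    · exact dz_lc s hs
    · exact hlc i s hs
  have hintC : ∀ i, ∀ s t : ℕ, t ≤ s → 0 < pC i s → 0 < pC i t := by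
    intro i s t hts; simp only [hpC]; split
    · exact dz_int s t hts
    · exact hint i s t hts
  set f' : (Fin ℓ → ℕ) → ℝ := fun k => f k + Cf with hf'
  set g' : (Fin ℓ → ℕ) → ℝ := fun k => g k + Cg with hg'
  have hf'm : Monotone f' := fun x y hxy => add_le_add_left (hfm hxy) Cf
  have hg'm : Monotone g' := fun x y hxy => add_le_add_left (hgm hxy) Cg
  have hf'0 : ∀ k, 0 ≤ f' k := fun k => by
    have := (abs_le.1 (hCf k)).1; simp only [hf']; linarith
  have hg'0 : ∀ k, 0 ≤ g' k := fun k => by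
    have := (abs_le.1 (hCg k)).1; simp only [hg']; linarith
  have hf'A : ∀ k k' : Fin ℓ → ℕ, (∀ i ∈ A, k i = k' i) → f' k = f' k' := by
    intro k k' h; simp only [hf']; rw [hfA k k' h]
  have hg'C : ∀ k k' : Fin ℓ → ℕ, (∀ i ∉ A, k i = k' i) → g' k = g' k' := by
    intro k k' h; simp only [hg']
    rw [hgB k k' (fun j hj => h j (Finset.disjoint_right.mp hAB hj))]
  have h1trivial : ∀ k k' : Fin ℓ → ℕ, (∀ i ∈ A, k i = k' i) →
      (fun _ : Fin ℓ → ℕ => (1:ℝ)) k = (fun _ : Fin ℓ → ℕ => (1:ℝ)) k' := fun _ _ _ => rfl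
  have h1trivial' : ∀ k k' : Fin ℓ → ℕ, (∀ i ∉ A, k i = k' i) →
      (fun _ : Fin ℓ → ℕ => (1:ℝ)) k = (fun _ : Fin ℓ → ℕ => (1:ℝ)) k' := fun _ _ _ => rfl
  -- the four decompositions
  have hfg : ES ℓ n p (fun k => f' k * g' k)
      = ∑ u ∈ Finset.HasAntidiagonal.antidiagonal n, ES ℓ u.1 pA f' * ES ℓ u.2 pC g' :=
    ES_split ℓ p A n f' g' hf'A hg'C
  have hfd : ES ℓ n p f'
      = ∑ u ∈ Finset.HasAntidiagonal.antidiagonal n, ES ℓ u.1 pA f' * condZ ℓ u.2 pC := by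
    have e0 : ES ℓ n p f' = ES ℓ n p (fun k => f' k * (fun _ : Fin ℓ → ℕ => (1:ℝ)) k) := by
      unfold ES
      exact Finset.sum_congr rfl fun k _ => by simp
    rw [e0, ES_split ℓ p A n f' (fun _ => (1:ℝ)) hf'A h1trivial']
    exact Finset.sum_congr rfl fun u _ => by rw [condZ_eq_ES]
  have hgd : ES ℓ n p g'
      = ∑ u ∈ Finset.HasAntidiagonal.antidiagonal n, condZ ℓ u.1 pA * ES ℓ u.2 pC g' := by
    have e0 : ES ℓ n p g' = ES ℓ n p (fun k => (fun _ : Fin ℓ → ℕ => (1:ℝ)) k * g' k) := by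
      unfold ES
      exact Finset.sum_congr rfl fun k _ => by simp
    rw [e0, ES_split ℓ p A n (fun _ => (1:ℝ)) g' h1trivial hg'C]
    exact Finset.sum_congr rfl fun u _ => by rw [condZ_eq_ES]
  have hZd : condZ ℓ n p
      = ∑ u ∈ Finset.HasAntidiagonal.antidiagonal n, condZ ℓ u.1 pA * condZ ℓ u.2 pC := by
    rw [condZ_eq_ES]
    have e0 : ES ℓ n p (fun _ => (1:ℝ))
        = ES ℓ n p (fun k => (fun _ : Fin ℓ → ℕ => (1:ℝ)) k * (fun _ : Fin ℓ → ℕ => (1:ℝ)) k) := by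
      unfold ES
      exact Finset.sum_congr rfl fun k _ => by simp
    rw [e0, ES_split ℓ p A n (fun _ => (1:ℝ)) (fun _ => (1:ℝ)) h1trivial h1trivial']
    exact Finset.sum_congr rfl fun u _ => by rw [condZ_eq_ES, condZ_eq_ES]
  -- Chebyshev
  have key : ES ℓ n p (fun k => f' k * g' k) * condZ ℓ n p
      ≤ ES ℓ n p f' * ES ℓ n p g' := by
    rw [hfg, hfd, hgd, hZd]
    exact cheb n (fun s => ES ℓ s pA f') (fun t => ES ℓ t pC g')
      (fun s => condZ ℓ s pA) (fun t => condZ ℓ t pC)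
      (efron_chain ℓ pA hp0A hlcA hintA f' hf'm hf'0)
      (efron_chain ℓ pC hp0C hlcC hintC g' hg'm hg'0)
  -- remove the shifts
  have e1 : ES ℓ n p (fun k => f' k * g' k)
      = ES ℓ n p (fun k => f k * g k) + Cg * ES ℓ n p f + Cf * ES ℓ n p g
        + (Cf * Cg) * condZ ℓ n p := ES_expand ℓ n p f g Cf Cg
  have e2 : ES ℓ n p f' = ES ℓ n p f + Cf * condZ ℓ n p := ES_add_const ℓ n p f Cf
  have e3 : ES ℓ n p g' = ES ℓ n p g + Cg * condZ ℓ n p := ES_add_const ℓ n p g Cg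
  rw [e1, e2, e3] at key
  have key3 : ES ℓ n p (fun k => f k * g k) * condZ ℓ n p
      ≤ ES ℓ n p f * ES ℓ n p g := by nlinarith [key]
  -- conclude
  rw [condExp_eq, condExp_eq, condExp_eq, div_mul_div_comm, sub_nonpos,
    div_le_div_iff₀ hZ (mul_pos hZ hZ)]
  nlinarith [mul_le_mul_of_nonneg_right key3 (le_of_lt hZ)]
end split
end

section
/- Let V₁ and V₂ be independent ℤ₊-valued LC random variables, each of whose support is an interval of ℤ₊ containing 0. Then for every integer t ≥ 0 and every integer s such that P(V₁ + V₂ = s) > 0 and P(V₁ + V₂ = s+1) > 0, one has P(V₁ ≤ t | V₁ + V₂ = s+1) ≤ P(V₁ ≤ t | V₁ + V₂ = s). -/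
/-- `P(V₁ + V₂ = s)`: convolution of the mass functions `p₁`, `p₂`. -/
noncomputable def convProb (p₁ p₂ : ℕ → ℝ) (s : ℕ) : ℝ :=
  ∑ x ∈ Finset.range (s + 1), p₁ x * p₂ (s - x)

/-- `P(V₁ ≤ t, V₁ + V₂ = s)`. -/
noncomputable def convProbLe (p₁ p₂ : ℕ → ℝ) (t s : ℕ) : ℝ :=
  ∑ x ∈ Finset.range (s + 1), if x ≤ t then p₁ x * p₂ (s - x) else 0

/-!
With `S = V₁ + V₂`, the comparison of the two conditional probabilities reduces to
`P(V₁ ≤ t, S = s+1) P(V₁ > t, S = s) ≤ P(V₁ ≤ t, S = s) P(V₁ > t, S = s+1)`. Expanding both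
products over pairs `x ≤ t < y`, this holds termwise because a log-concave sequence `q` without
internal zeros satisfies `q i q (j+1) ≤ q (i+1) q j` for `i ≤ j`, applied to `q = p₂` at
`i = s - y`, `j = s - x`.
-/

open Finset

section OrderedField

variable {K : Type*} [Field K] [LinearOrder K] [IsStrictOrderedRing K]

lemma mul_succ_le_succ_mul_of_logConcave {q : ℕ → K} (hq0 : ∀ n, 0 ≤ q n)
    (hlc : ∀ n, q n * q (n + 2) ≤ q (n + 1) ^ 2)
    (hint : ∀ m n, n ≤ m → 0 < q m → 0 < q n) {i j : ℕ} (hij : i ≤ j) :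
    q i * q (j + 1) ≤ q (i + 1) * q j := by
  induction j, hij using Nat.le_induction with
  | base => rw [mul_comm]
  | succ j hij ih =>
    rcases (hq0 (j + 1)).eq_or_lt with hzero | hpos
    · have hnext : q (j + 2) = 0 :=
        (hq0 _).antisymm' (not_lt.mp fun h => hzero.not_lt (hint _ _ (by omega) h))
      rw [hnext, mul_zero, ← hzero, mul_zero]
    · have hj : 0 < q j := hint _ _ (by omega) hpos
      refine le_of_mul_le_mul_left ?_ hj
      calc q j * (q i * q (j + 2)) = q i * (q j * q (j + 2)) := by ring
        _ ≤ q i * q (j + 1) ^ 2 := mul_le_mul_of_nonneg_left (hlc j) (hq0 i)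
        _ = q (j + 1) * (q i * q (j + 1)) := by ring
        _ ≤ q (j + 1) * (q (i + 1) * q j) := mul_le_mul_of_nonneg_left ih hpos.le
        _ = q j * (q (i + 1) * q (j + 1)) := by ring

lemma div_add_le_div_add {a b a' b' : K} (h : a' * b ≤ a * b') (hab : 0 < a + b)
    (hab' : 0 < a' + b') : a' / (a' + b') ≤ a / (a + b) := by
  rw [div_le_div_iff₀ hab' hab]
  linarith

end OrderedField

section

variable (p₁ p₂ : ℕ → ℝ)

/-- `P(V₁ > t, V₁ + V₂ = s)`. -/
noncomputable def convProbGt (t s : ℕ) : ℝ :=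
  ∑ y ∈ Ioc t s, p₁ y * p₂ (s - y)

lemma convProb_eq_convProbLe_add_convProbGt (t s : ℕ) :
    convProb p₁ p₂ s = convProbLe p₁ p₂ t s + convProbGt p₁ p₂ t s := by
  have hIoc : Ioc t s = (range (s + 1)).filter (t < ·) := by
    ext y; simp only [mem_Ioc, mem_filter, mem_range]; omega
  rw [convProb, convProbLe, convProbGt, hIoc, sum_filter, ← sum_add_distrib]
  refine sum_congr rfl fun x _ => ?_
  by_cases hx : x ≤ t
  · simp [hx, not_lt.mpr hx]
  · simp [hx, not_le.mp hx]

lemma convProbLe_of_le {t s : ℕ} (hts : t ≤ s) :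
    convProbLe p₁ p₂ t s = ∑ x ∈ range (t + 1), p₁ x * p₂ (s - x) := by
  rw [convProbLe, ← sum_filter]
  congr 1
  ext x; simp only [mem_filter, mem_range]; omega

variable {p₁ p₂}

lemma convProbLe_nonneg (hp₁0 : ∀ n, 0 ≤ p₁ n) (hp₂0 : ∀ n, 0 ≤ p₂ n) (t s : ℕ) :
    0 ≤ convProbLe p₁ p₂ t s :=
  sum_nonneg fun _ _ => ite_nonneg (mul_nonneg (hp₁0 _) (hp₂0 _)) le_rfl

lemma convProbGt_nonneg (hp₁0 : ∀ n, 0 ≤ p₁ n) (hp₂0 : ∀ n, 0 ≤ p₂ n) (t s : ℕ) :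
    0 ≤ convProbGt p₁ p₂ t s :=
  sum_nonneg fun _ _ => mul_nonneg (hp₁0 _) (hp₂0 _)

lemma convProbLe_succ_mul_convProbGt_le (hp₁0 : ∀ n, 0 ≤ p₁ n) (hp₂0 : ∀ n, 0 ≤ p₂ n)
    (hlc₂ : ∀ n, p₂ n * p₂ (n + 2) ≤ p₂ (n + 1) ^ 2)
    (hint₂ : ∀ m n, n ≤ m → 0 < p₂ m → 0 < p₂ n) (t s : ℕ) :
    convProbLe p₁ p₂ t (s + 1) * convProbGt p₁ p₂ t s ≤
      convProbLe p₁ p₂ t s * convProbGt p₁ p₂ t (s + 1) := by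
  rcases le_or_gt s t with hst | hts
  · rw [convProbGt, Ioc_eq_empty_of_le hst, sum_empty, mul_zero]
    exact mul_nonneg (convProbLe_nonneg hp₁0 hp₂0 t s) (convProbGt_nonneg hp₁0 hp₂0 t _)
  rw [convProbLe_of_le _ _ (by omega), convProbLe_of_le _ _ hts.le, convProbGt, convProbGt,
    sum_mul_sum, sum_mul_sum]
  refine sum_le_sum fun x hx => ?_
  have hxt : x ≤ t := Nat.lt_succ_iff.mp (mem_range.mp hx)
  calc ∑ y ∈ Ioc t s, p₁ x * p₂ (s + 1 - x) * (p₁ y * p₂ (s - y))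
      ≤ ∑ y ∈ Ioc t s, p₁ x * p₂ (s - x) * (p₁ y * p₂ (s + 1 - y)) := by
        refine sum_le_sum fun y hy => ?_
        obtain ⟨hty, hys⟩ := mem_Ioc.mp hy
        have hlc : p₂ (s - y) * p₂ (s - x + 1) ≤ p₂ (s - y + 1) * p₂ (s - x) :=
          mul_succ_le_succ_mul_of_logConcave hp₂0 hlc₂ hint₂ (by omega)
        rw [show s + 1 - x = s - x + 1 by omega, show s + 1 - y = s - y + 1 by omega]
        calc p₁ x * p₂ (s - x + 1) * (p₁ y * p₂ (s - y))
            = p₁ x * p₁ y * (p₂ (s - y) * p₂ (s - x + 1)) := by ring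
          _ ≤ p₁ x * p₁ y * (p₂ (s - y + 1) * p₂ (s - x)) :=
            mul_le_mul_of_nonneg_left hlc (mul_nonneg (hp₁0 x) (hp₁0 y))
          _ = p₁ x * p₂ (s - x) * (p₁ y * p₂ (s - y + 1)) := by ring
    _ ≤ ∑ y ∈ Ioc t (s + 1), p₁ x * p₂ (s - x) * (p₁ y * p₂ (s + 1 - y)) :=
        sum_le_sum_of_subset_of_nonneg (Ioc_subset_Ioc_right (Nat.le_succ s)) fun y _ _ =>
          mul_nonneg (mul_nonneg (hp₁0 _) (hp₂0 _)) (mul_nonneg (hp₁0 _) (hp₂0 _))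

end

theorem stmt6_general (p₁ p₂ : ℕ → ℝ)
    (hp₁0 : ∀ s, 0 ≤ p₁ s) (hp₂0 : ∀ s, 0 ≤ p₂ s)
    (hlc₂ : ∀ s : ℕ, 1 ≤ s → p₂ s ^ 2 ≥ p₂ (s - 1) * p₂ (s + 1))
    (hint₂ : ∀ s t : ℕ, t ≤ s → 0 < p₂ s → 0 < p₂ t)
    (t s : ℕ) (hs : 0 < convProb p₁ p₂ s) (hs1 : 0 < convProb p₁ p₂ (s + 1)) :
    convProbLe p₁ p₂ t (s + 1) / convProb p₁ p₂ (s + 1) ≤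
      convProbLe p₁ p₂ t s / convProb p₁ p₂ s := by
  simp only [convProb_eq_convProbLe_add_convProbGt _ _ t] at hs hs1 ⊢
  exact div_add_le_div_add (convProbLe_succ_mul_convProbGt_le hp₁0 hp₂0
    (fun n => hlc₂ (n + 1) n.succ_pos) hint₂ t s) hs hs1

/-- if `V₁`, `V₂` are independent `ℤ₊`-valued log-concave random variables,
each with interval support containing `0`, then for every `t ≥ 0` and every `s` with
`P(V₁+V₂ = s) > 0` and `P(V₁+V₂ = s+1) > 0`,
`P(V₁ ≤ t | V₁+V₂ = s+1) ≤ P(V₁ ≤ t | V₁+V₂ = s)`. -/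
theorem stmt6 (p₁ p₂ : ℕ → ℝ)
    (hp₁0 : ∀ s, 0 ≤ p₁ s) (hp₂0 : ∀ s, 0 ≤ p₂ s)
    (hp₁1 : ∑' s, p₁ s = 1) (hp₂1 : ∑' s, p₂ s = 1)
    (hlc₁ : ∀ s : ℕ, 1 ≤ s → p₁ s ^ 2 ≥ p₁ (s - 1) * p₁ (s + 1))
    (hlc₂ : ∀ s : ℕ, 1 ≤ s → p₂ s ^ 2 ≥ p₂ (s - 1) * p₂ (s + 1))
    (hzero₁ : 0 < p₁ 0) (hint₁ : ∀ s t : ℕ, t ≤ s → 0 < p₁ s → 0 < p₁ t)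
    (hzero₂ : 0 < p₂ 0) (hint₂ : ∀ s t : ℕ, t ≤ s → 0 < p₂ s → 0 < p₂ t)
    (t s : ℕ) (hs : 0 < convProb p₁ p₂ s) (hs1 : 0 < convProb p₁ p₂ (s + 1)) :
    convProbLe p₁ p₂ t (s + 1) / convProb p₁ p₂ (s + 1) ≤
      convProbLe p₁ p₂ t s / convProb p₁ p₂ s :=
  stmt6_general p₁ p₂ hp₁0 hp₂0 hlc₂ hint₂ t s hs hs1
end

section
/- Let A be a nonempty finite index set and let (ξ_j)_{j∈A} be random variables with E ξ_j = 0 and E ξ_j⁴ ≤ b for all j ∈ A, where b ≥ 0. Suppose that for all distinct i, j ∈ A: E[ξ_i ξ_j³] ≤ 0; for all distinct i, j, k ∈ A: E[ξ_i ξ_j ξ_k²] ≤ 0; and for all distinct i, j, k, m ∈ A: E[ξ_i ξ_j ξ_k ξ_m] ≤ 0. Then E[(Σ_{j∈A} ξ_j)⁴] ≤ 3 b |A|². -/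
open MeasureTheory

/-- if `(ξ_j)_{j∈A}` is a nonempty finite family of centred random variables
with `E ξ_j⁴ ≤ b`, whose mixed centred fourth moments of the patterns `(1,3)`, `(1,1,2)`
and `(1,1,1,1)` over distinct indices are all `≤ 0` (as for negatively associated
families), then `E[(Σ_{j∈A} ξ_j)⁴] ≤ 3 b |A|²`. -/
theorem stmt9 {Ω : Type*} [MeasurableSpace Ω] (μ : Measure Ω) [IsProbabilityMeasure μ]
    {ι : Type*} (A : Finset ι) (hA : A.Nonempty) (ξ : ι → Ω → ℝ) (b : ℝ) (hb : 0 ≤ b)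
    (hL4 : ∀ j ∈ A, MeasureTheory.MemLp (ξ j) 4 μ)
    (hmean : ∀ j ∈ A, ∫ ω, ξ j ω ∂μ = 0)
    (h4 : ∀ j ∈ A, ∫ ω, (ξ j ω) ^ 4 ∂μ ≤ b)
    (h13 : ∀ i ∈ A, ∀ j ∈ A, i ≠ j → ∫ ω, ξ i ω * (ξ j ω) ^ 3 ∂μ ≤ 0)
    (h112 : ∀ i ∈ A, ∀ j ∈ A, ∀ k ∈ A, i ≠ j → i ≠ k → j ≠ k →
      ∫ ω, ξ i ω * ξ j ω * (ξ k ω) ^ 2 ∂μ ≤ 0)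
    (h1111 : ∀ i ∈ A, ∀ j ∈ A, ∀ k ∈ A, ∀ m ∈ A,
      i ≠ j → i ≠ k → i ≠ m → j ≠ k → j ≠ m → k ≠ m →
      ∫ ω, ξ i ω * ξ j ω * ξ k ω * ξ m ω ∂μ ≤ 0) :
    ∫ ω, (∑ j ∈ A, ξ j ω) ^ 4 ∂μ ≤ 3 * b * (A.card : ℝ) ^ 2 := by
  classical
  -- products of two L⁴ functions are in L²
  have hmul2 : ∀ i ∈ A, ∀ j ∈ A, MemLp (fun ω => ξ i ω * ξ j ω) 2 μ := by
    intro i hi j hj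
    have h := (hL4 j hj).smul (r := 2) (hL4 i hi)
      (hpqr := ⟨by rw [show (4 : ENNReal) = 2 * 2 by norm_num, ENNReal.mul_inv (by simp) (by simp),
            ← two_mul, ← mul_assoc, ENNReal.mul_inv_cancel (by simp) (by simp), one_mul]⟩)
    simpa [smul_eq_mul, Pi.mul_def] using h
  -- products of two L² functions are integrable
  have hint2 : ∀ f g : Ω → ℝ, MemLp f 2 μ → MemLp g 2 μ →
      Integrable (fun ω => f ω * g ω) μ := by
    intro f g hf hg
    have h := hg.smul (r := 1) hf (hpqr := ⟨by
      rw [ENNReal.inv_two_add_inv_two, inv_one]⟩)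
    rw [memLp_one_iff_integrable] at h
    simpa [smul_eq_mul, Pi.mul_def] using h
  -- every quadruple product is integrable
  have hint4 : ∀ i ∈ A, ∀ j ∈ A, ∀ k ∈ A, ∀ m ∈ A,
      Integrable (fun ω => ξ i ω * ξ j ω * ξ k ω * ξ m ω) μ := by
    intro i hi j hj k hk m hm
    have h := hint2 _ _ (hmul2 i hi j hj) (hmul2 k hk m hm)
    refine h.congr ?_
    filter_upwards with ω
    ring
  -- bound on E[ξ_a² ξ_c²]
  have hsq : ∀ a ∈ A, ∀ c ∈ A, ∫ ω, (ξ a ω) ^ 2 * (ξ c ω) ^ 2 ∂μ ≤ b := by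
    intro a ha c hc
    have h1 : Integrable (fun ω => (ξ a ω * ξ c ω) ^ 2) μ := (hmul2 a ha c hc).integrable_sq
    have h1' : Integrable (fun ω => (ξ a ω) ^ 2 * (ξ c ω) ^ 2) μ := by
      refine h1.congr ?_; filter_upwards with ω; ring
    have h2 : Integrable (fun ω => (ξ a ω * ξ a ω) ^ 2) μ := (hmul2 a ha a ha).integrable_sq
    have h2' : Integrable (fun ω => (ξ a ω) ^ 4) μ := by
      refine h2.congr ?_; filter_upwards with ω; ring
    have h3 : Integrable (fun ω => (ξ c ω * ξ c ω) ^ 2) μ := (hmul2 c hc c hc).integrable_sq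
    have h3' : Integrable (fun ω => (ξ c ω) ^ 4) μ := by
      refine h3.congr ?_; filter_upwards with ω; ring
    have hpt : ∀ ω, (ξ a ω) ^ 2 * (ξ c ω) ^ 2 ≤ ((ξ a ω) ^ 4 + (ξ c ω) ^ 4) / 2 := by
      intro ω; nlinarith [sq_nonneg ((ξ a ω) ^ 2 - (ξ c ω) ^ 2)]
    calc ∫ ω, (ξ a ω) ^ 2 * (ξ c ω) ^ 2 ∂μ
        ≤ ∫ ω, ((ξ a ω) ^ 4 + (ξ c ω) ^ 4) / 2 ∂μ :=
          integral_mono h1' ((h2'.add h3').div_const 2) hpt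
      _ = ((∫ ω, (ξ a ω) ^ 4 ∂μ) + ∫ ω, (ξ c ω) ^ 4 ∂μ) / 2 := by
          rw [integral_div, integral_add h2' h3']
      _ ≤ (b + b) / 2 := by
          have := h4 a ha; have := h4 c hc; linarith
      _ = b := by ring
  -- key termwise bound
  have key : ∀ i ∈ A, ∀ j ∈ A, ∀ k ∈ A, ∀ m ∈ A,
      ∫ ω, ξ i ω * ξ j ω * ξ k ω * ξ m ω ∂μ ≤
        (if i = j ∧ k = m then b else 0) + (if i = k ∧ j = m then b else 0)
          + (if i = m ∧ j = k then b else 0) := by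
    intro i hi j hj k hk m hm
    have hite : ∀ p : Prop, ∀ _ : Decidable p, (0 : ℝ) ≤ if p then b else 0 := by
      intro p hp; split <;> simp [hb]
    by_cases h1 : i = j ∧ k = m
    · obtain ⟨rfl, rfl⟩ := h1
      have hbound : ∫ ω, ξ i ω * ξ i ω * ξ k ω * ξ k ω ∂μ ≤ b := by
        refine le_trans (le_of_eq ?_) (hsq i hi k hk)
        exact integral_congr_ae (Filter.Eventually.of_forall fun ω => by ring)
      refine hbound.trans ?_
      split_ifs <;> first | linarith | simp_all
    by_cases h2 : i = k ∧ j = m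
    · obtain ⟨rfl, rfl⟩ := h2
      have hbound : ∫ ω, ξ i ω * ξ j ω * ξ i ω * ξ j ω ∂μ ≤ b := by
        refine le_trans (le_of_eq ?_) (hsq i hi j hj)
        exact integral_congr_ae (Filter.Eventually.of_forall fun ω => by ring)
      refine hbound.trans ?_
      split_ifs <;> first | linarith | simp_all
    by_cases h3 : i = m ∧ j = k
    · obtain ⟨rfl, rfl⟩ := h3
      have hbound : ∫ ω, ξ i ω * ξ j ω * ξ j ω * ξ i ω ∂μ ≤ b := by
        refine le_trans (le_of_eq ?_) (hsq i hi j hj)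
        exact integral_congr_ae (Filter.Eventually.of_forall fun ω => by ring)
      refine hbound.trans ?_
      split_ifs <;> first | linarith | simp_all
    -- no pairing holds: the integral is ≤ 0
    · simp only [if_neg h1, if_neg h2, if_neg h3, add_zero]
      have hE : ∀ (f : Ω → ℝ), (∀ ω, ξ i ω * ξ j ω * ξ k ω * ξ m ω = f ω) →
          (∫ ω, f ω ∂μ ≤ 0) → ∫ ω, ξ i ω * ξ j ω * ξ k ω * ξ m ω ∂μ ≤ 0 := by
        intro f hf hle
        refine le_trans (le_of_eq ?_) hle
        exact integral_congr_ae (Filter.Eventually.of_forall fun ω => hf ω)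
      by_cases hij : i = j
      · subst hij
        have hkm : k ≠ m := fun h => h1 ⟨rfl, h⟩
        by_cases hik : i = k
        · subst hik
          have him : i ≠ m := fun h => hkm h
          exact hE _ (fun ω => by ring) (h13 m hm i hi (Ne.symm him))
        · by_cases him : i = m
          · subst him
            exact hE _ (fun ω => by ring) (h13 k hk i hi (Ne.symm hik))
          · exact hE _ (fun ω => by ring)
              (h112 k hk m hm i hi hkm (Ne.symm hik) (Ne.symm him))
      · by_cases hik : i = k
        · subst hik
          have hjm : j ≠ m := fun h => h2 ⟨rfl, h⟩
          by_cases him : i = m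
          · subst him
            exact hE _ (fun ω => by ring) (h13 j hj i hi (Ne.symm hij))
          · exact hE _ (fun ω => by ring)
              (h112 j hj m hm i hi hjm (Ne.symm hij) (Ne.symm him))
        · by_cases him : i = m
          · subst him
            have hjk : j ≠ k := fun h => h3 ⟨rfl, h⟩
            exact hE _ (fun ω => by ring)
              (h112 j hj k hk i hi hjk (Ne.symm hij) (Ne.symm hik))
          · by_cases hjk : j = k
            · subst hjk
              by_cases hjm : j = m
              · subst hjm
                exact hE _ (fun ω => by ring) (h13 i hi j hj hij)
              · exact hE _ (fun ω => by ring)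
                  (h112 i hi m hm j hj him hij (Ne.symm hjm))
            · by_cases hjm : j = m
              · subst hjm
                exact hE _ (fun ω => by ring)
                  (h112 i hi k hk j hj hik hij (Ne.symm hjk))
              · by_cases hkm : k = m
                · subst hkm
                  exact hE _ (fun ω => by ring) (h112 i hi j hj k hk hij hik hjk)
                · exact h1111 i hi j hj k hk m hm hij hik him hjk hjm hkm
  -- expansion of the fourth power
  have expand : ∀ ω, (∑ j ∈ A, ξ j ω) ^ 4
      = ∑ i ∈ A, ∑ k ∈ A, ∑ j ∈ A, ∑ m ∈ A, ξ i ω * ξ j ω * ξ k ω * ξ m ω := by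
    intro ω
    calc (∑ j ∈ A, ξ j ω) ^ 4
        = (∑ i ∈ A, ∑ j ∈ A, ξ i ω * ξ j ω) * (∑ k ∈ A, ∑ m ∈ A, ξ k ω * ξ m ω) := by
          rw [← Finset.sum_mul_sum]; ring
      _ = ∑ i ∈ A, ∑ k ∈ A, (∑ j ∈ A, ξ i ω * ξ j ω) * (∑ m ∈ A, ξ k ω * ξ m ω) :=
          Finset.sum_mul_sum _ _ _ _
      _ = ∑ i ∈ A, ∑ k ∈ A, ∑ j ∈ A, ∑ m ∈ A, ξ i ω * ξ j ω * ξ k ω * ξ m ω := by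
          refine Finset.sum_congr rfl fun i _ => Finset.sum_congr rfl fun k _ => ?_
          rw [Finset.sum_mul_sum]
          exact Finset.sum_congr rfl fun j _ => Finset.sum_congr rfl fun m _ => by ring
  -- integral of the expansion
  have hswap : ∫ ω, (∑ j ∈ A, ξ j ω) ^ 4 ∂μ
      = ∑ i ∈ A, ∑ k ∈ A, ∑ j ∈ A, ∑ m ∈ A, ∫ ω, ξ i ω * ξ j ω * ξ k ω * ξ m ω ∂μ := by
    rw [show (fun ω => (∑ j ∈ A, ξ j ω) ^ 4)
        = fun ω => ∑ i ∈ A, ∑ k ∈ A, ∑ j ∈ A, ∑ m ∈ A, ξ i ω * ξ j ω * ξ k ω * ξ m ω from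
      funext expand]
    rw [integral_finset_sum A fun i hi => integrable_finset_sum A fun k hk =>
      integrable_finset_sum A fun j hj => integrable_finset_sum A fun m hm => hint4 i hi j hj k hk m hm]
    refine Finset.sum_congr rfl fun i hi => ?_
    rw [integral_finset_sum A fun k hk => integrable_finset_sum A fun j hj =>
      integrable_finset_sum A fun m hm => hint4 i hi j hj k hk m hm]
    refine Finset.sum_congr rfl fun k hk => ?_
    rw [integral_finset_sum A fun j hj => integrable_finset_sum A fun m hm =>
      hint4 i hi j hj k hk m hm]
    refine Finset.sum_congr rfl fun j hj => ?_
    rw [integral_finset_sum A fun m hm => hint4 i hi j hj k hk m hm]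
  -- counting
  have count : (∑ i ∈ A, ∑ k ∈ A, ∑ j ∈ A, ∑ m ∈ A,
      ((if i = j ∧ k = m then b else 0) + (if i = k ∧ j = m then b else 0)
        + (if i = m ∧ j = k then b else 0))) = 3 * b * (A.card : ℝ) ^ 2 := by
    have step : ∀ i ∈ A, ∀ k ∈ A, (∑ j ∈ A, ∑ m ∈ A,
        ((if i = j ∧ k = m then b else 0) + (if i = k ∧ j = m then b else 0)
          + (if i = m ∧ j = k then b else 0)))
        = b + (if i = k then b * A.card else 0) + b := by
      intro i hi k hk
      have e1 : (∑ j ∈ A, ∑ m ∈ A, (if i = j ∧ k = m then b else 0)) = b := by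
        have inner : ∀ j, (∑ m ∈ A, (if i = j ∧ k = m then b else 0))
            = if i = j then b else 0 := by
          intro j
          by_cases h : i = j
          · simp [h, Finset.sum_ite_eq, hk]
          · simp [h]
        simp only [inner, Finset.sum_ite_eq, hi, if_true]
      have e2 : (∑ j ∈ A, ∑ m ∈ A, (if i = k ∧ j = m then b else 0))
          = if i = k then b * A.card else 0 := by
        have inner : ∀ j ∈ A, (∑ m ∈ A, (if i = k ∧ j = m then b else 0))
            = if i = k then b else 0 := by
          intro j hj
          by_cases h : i = k
          · simp [h, Finset.sum_ite_eq, hj]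
          · simp [h]
        rw [Finset.sum_congr rfl inner]
        by_cases h : i = k <;> simp [h, Finset.sum_const, mul_comm]
      have e3 : (∑ j ∈ A, ∑ m ∈ A, (if i = m ∧ j = k then b else 0)) = b := by
        have inner : ∀ j, (∑ m ∈ A, (if i = m ∧ j = k then b else 0))
            = if j = k then b else 0 := by
          intro j
          by_cases h : j = k
          · simp [h, Finset.sum_ite_eq, hi]
          · simp [h]
        simp only [inner, Finset.sum_ite_eq', hk, if_true]
      simp only [Finset.sum_add_distrib, e1, e2, e3]
    rw [Finset.sum_congr rfl fun i hi => Finset.sum_congr rfl fun k hk => step i hi k hk]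
    have e4 : ∀ i ∈ A, (∑ k ∈ A, (b + (if i = k then b * A.card else 0) + b))
        = A.card * (2 * b) + b * A.card := by
      intro i hi
      rw [Finset.sum_add_distrib, Finset.sum_add_distrib]
      simp [Finset.sum_ite_eq, hi, Finset.sum_const, mul_comm, two_mul]
      ring
    rw [Finset.sum_congr rfl e4]
    rw [Finset.sum_const]
    ring
  -- conclusion
  rw [hswap, ← count]
  refine Finset.sum_le_sum fun i hi => Finset.sum_le_sum fun k hk =>
    Finset.sum_le_sum fun j hj => Finset.sum_le_sum fun m hm => key i hi j hj k hk m hm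
end

section
/- Let X₁, …, X_M be independent {0,1}-valued random variables with P(X_i = 1) = p_i ∈ (0,1), let S = Σ_{i=1}^M X_i, and set k* = (1/M) Σ_{i=1}^M p_i/(1−p_i). Then for every integer 1 ≤ n ≤ M, P(S = n−1) · (M−n+1) · k* ≥ n · P(S = n); equivalently P(S = n−1)/P(S = n) ≥ n / ((M−n+1) k*). -/
/-- The probability that a string of independent `{0,1}`-valued random variables,
where the `i`-th has success probability `p i`, takes the value `x`. -/
noncomputable def bernProb {M : ℕ} (p : Fin M → ℝ) (x : Fin M → Bool) : ℝ :=
  ∏ i, if x i then p i else 1 - p i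

/-- The number of ones in the binary string `x`. -/
def onesCount {M : ℕ} (x : Fin M → Bool) : ℕ :=
  (Finset.univ.filter (fun i => x i = true)).card

/-- `P(S = n)` where `S = Σᵢ Xᵢ` is the sum of the independent `{0,1}`-valued variables. -/
noncomputable def probSum {M : ℕ} (p : Fin M → ℝ) (n : ℕ) : ℝ :=
  ∑ x : Fin M → Bool, if onesCount x = n then bernProb p x else 0

/-- derivative identity: `∑_{|B|=k} (∑_{i∉B} q i) ∏_B q = (k+1) ∑_{|A|=k+1} ∏_A q`. -/
lemma der_esymm {M : ℕ} (q : Fin M → ℝ) (k : ℕ) :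
    ∑ B ∈ Finset.powersetCard k (Finset.univ : Finset (Fin M)),
      (∑ i ∈ Bᶜ, q i) * ∏ j ∈ B, q j
    = ((k:ℝ)+1) * ∑ A ∈ Finset.powersetCard (k+1) (Finset.univ : Finset (Fin M)),
        ∏ j ∈ A, q j := by
  have hL : ∀ B : Finset (Fin M), (∑ i ∈ Bᶜ, q i) * ∏ j ∈ B, q j
      = ∑ i ∈ Bᶜ, q i * ∏ j ∈ B, q j := fun B => Finset.sum_mul ..
  have hR : ∀ A ∈ Finset.powersetCard (k+1) (Finset.univ : Finset (Fin M)),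
      ((k:ℝ)+1) * ∏ j ∈ A, q j = ∑ i ∈ A, q i * ∏ j ∈ A.erase i, q j := by
    intro A hA
    have hcard : A.card = k + 1 := (Finset.mem_powersetCard.mp hA).2
    rw [Finset.sum_congr rfl (fun i hi => Finset.mul_prod_erase A q hi)]
    rw [Finset.sum_const, hcard, nsmul_eq_mul]
    push_cast; ring
  rw [Finset.mul_sum, Finset.sum_congr rfl hR, Finset.sum_congr rfl (fun B _ => hL B)]
  rw [Finset.sum_sigma', Finset.sum_sigma']
  refine Finset.sum_bij'
    (fun (x : (_ : Finset (Fin M)) × Fin M) _ =>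
      (⟨insert x.2 x.1, x.2⟩ : (_ : Finset (Fin M)) × Fin M))
    (fun (x : (_ : Finset (Fin M)) × Fin M) _ =>
      (⟨x.1.erase x.2, x.2⟩ : (_ : Finset (Fin M)) × Fin M)) ?_ ?_ ?_ ?_ ?_
  · rintro ⟨B, i⟩ hx
    simp only [Finset.mem_sigma, Finset.mem_powersetCard] at hx ⊢
    obtain ⟨⟨-, hB⟩, hi⟩ := hx
    have hiB : i ∉ B := by simpa using hi
    exact ⟨⟨Finset.subset_univ _, by rw [Finset.card_insert_of_notMem hiB, hB]⟩,
      Finset.mem_insert_self _ _⟩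
  · rintro ⟨A, i⟩ hx
    simp only [Finset.mem_sigma, Finset.mem_powersetCard] at hx ⊢
    obtain ⟨⟨-, hA⟩, hi⟩ := hx
    refine ⟨⟨Finset.subset_univ _, ?_⟩, by simp⟩
    rw [Finset.card_erase_of_mem hi, hA]
    omega
  · rintro ⟨B, i⟩ hx
    simp only [Finset.mem_sigma, Finset.mem_powersetCard] at hx
    have hiB : i ∉ B := by simpa using hx.2
    simp [Finset.erase_insert hiB]
  · rintro ⟨A, i⟩ hx
    simp only [Finset.mem_sigma, Finset.mem_powersetCard] at hx
    simp [Finset.insert_erase hx.2]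
  · rintro ⟨B, i⟩ hx
    simp only [Finset.mem_sigma, Finset.mem_powersetCard] at hx
    have hiB : i ∉ B := by simpa using hx.2
    simp [Finset.erase_insert hiB]

/-- reindexing for the triple sum. -/
lemma triple_reindex {M : ℕ} (q : Fin M → ℝ) (l : ℕ) :
    ∑ B ∈ Finset.powersetCard (l+1) (Finset.univ : Finset (Fin M)),
      ∑ i ∈ B, ∑ j ∈ Bᶜ, (q i - q j) * ∏ k ∈ B, q k
    = ∑ C ∈ Finset.powersetCard l (Finset.univ : Finset (Fin M)),
      ∑ i ∈ Cᶜ, ∑ j ∈ Cᶜ.erase i, (q i - q j) * (q i * ∏ k ∈ C, q k) := by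
  conv_lhs => rw [Finset.sum_sigma']
  conv_rhs => rw [Finset.sum_sigma']
  refine Finset.sum_bij'
    (fun (x : (_ : Finset (Fin M)) × Fin M) _ =>
      (⟨x.1.erase x.2, x.2⟩ : (_ : Finset (Fin M)) × Fin M))
    (fun (x : (_ : Finset (Fin M)) × Fin M) _ =>
      (⟨insert x.2 x.1, x.2⟩ : (_ : Finset (Fin M)) × Fin M)) ?_ ?_ ?_ ?_ ?_
  · rintro ⟨B, i⟩ hx
    simp only [Finset.mem_sigma, Finset.mem_powersetCard] at hx ⊢
    obtain ⟨⟨-, hB⟩, hi⟩ := hx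
    refine ⟨⟨Finset.subset_univ _, ?_⟩, by simp⟩
    rw [Finset.card_erase_of_mem hi, hB]
    omega
  · rintro ⟨C, i⟩ hx
    simp only [Finset.mem_sigma, Finset.mem_powersetCard, Finset.mem_compl] at hx ⊢
    obtain ⟨⟨-, hC⟩, hi⟩ := hx
    exact ⟨⟨Finset.subset_univ _, by rw [Finset.card_insert_of_notMem hi, hC]⟩,
      Finset.mem_insert_self _ _⟩
  · rintro ⟨B, i⟩ hx
    simp only [Finset.mem_sigma, Finset.mem_powersetCard] at hx
    simp [Finset.insert_erase hx.2]
  · rintro ⟨C, i⟩ hx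
    simp only [Finset.mem_sigma, Finset.mem_powersetCard, Finset.mem_compl] at hx
    simp [Finset.erase_insert hx.2]
  · rintro ⟨B, i⟩ hx
    simp only [Finset.mem_sigma, Finset.mem_powersetCard] at hx
    obtain ⟨⟨-, hB⟩, hi⟩ := hx
    have hd : ((B.erase i)ᶜ).erase i = Bᶜ := by
      ext j
      have hji : j ∉ B → j ≠ i := fun h e => h (e ▸ hi)
      simp only [Finset.mem_erase, Finset.mem_compl, ne_eq]
      tauto
    rw [hd, Finset.mul_prod_erase B q hi]

/-- symmetrization: `∑_{i≠j∈s} (q i - q j) q i = (1/2) ∑ (q i - q j)² ≥ 0`. -/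
lemma sym_nonneg {M : ℕ} (q : Fin M → ℝ) (s : Finset (Fin M)) :
    0 ≤ ∑ i ∈ s, ∑ j ∈ s.erase i, (q i - q j) * q i := by
  have hXY : (∑ i ∈ s, ∑ j ∈ s.erase i, (q i - q j) * q i)
      = ∑ i ∈ s, ∑ j ∈ s.erase i, (q j - q i) * q j := by
    simp only [← Finset.filter_ne', Finset.sum_filter]
    rw [Finset.sum_comm]
    exact Finset.sum_congr rfl fun a _ => Finset.sum_congr rfl fun b _ =>
      if_congr ne_comm rfl rfl
  have hsum : (∑ i ∈ s, ∑ j ∈ s.erase i, (q i - q j) * q i)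
      + (∑ i ∈ s, ∑ j ∈ s.erase i, (q j - q i) * q j)
      = ∑ i ∈ s, ∑ j ∈ s.erase i, (q i - q j)^2 := by
    rw [← Finset.sum_add_distrib]
    refine Finset.sum_congr rfl fun i _ => ?_
    rw [← Finset.sum_add_distrib]
    exact Finset.sum_congr rfl fun j _ => by ring
  have h0 : 0 ≤ (∑ i ∈ s, ∑ j ∈ s.erase i, (q i - q j) * q i)
      + (∑ i ∈ s, ∑ j ∈ s.erase i, (q j - q i) * q j) := by
    rw [hsum]
    exact Finset.sum_nonneg fun i _ => Finset.sum_nonneg fun j _ => sq_nonneg _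
  linarith [hXY]

/-- key Newton-type inequality: `(m+1)·M·E_{m+1} ≤ (M−m)·e₁·E_m` for positive `q`. -/
lemma key_ineq {M : ℕ} (q : Fin M → ℝ) (hq : ∀ i, 0 < q i) (m : ℕ) (hm : m + 1 ≤ M) :
    ((m:ℝ)+1) * M * (∑ A ∈ Finset.powersetCard (m+1) (Finset.univ : Finset (Fin M)), ∏ j ∈ A, q j)
    ≤ ((M:ℝ) - m) * ((∑ i, q i) *
        ∑ B ∈ Finset.powersetCard m (Finset.univ : Finset (Fin M)), ∏ j ∈ B, q j) := by
  set e1 := ∑ i, q i with he1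
  set Em := ∑ B ∈ Finset.powersetCard m (Finset.univ : Finset (Fin M)), ∏ j ∈ B, q j with hEm
  set En := ∑ A ∈ Finset.powersetCard (m+1) (Finset.univ : Finset (Fin M)), ∏ j ∈ A, q j with hEn
  set T := ∑ B ∈ Finset.powersetCard m (Finset.univ : Finset (Fin M)),
    (∑ i ∈ B, q i) * ∏ j ∈ B, q j with hT
  set U := ∑ B ∈ Finset.powersetCard m (Finset.univ : Finset (Fin M)),
    (∑ i ∈ Bᶜ, q i) * ∏ j ∈ B, q j with hU
  set S := ∑ B ∈ Finset.powersetCard m (Finset.univ : Finset (Fin M)),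
    ∑ i ∈ B, ∑ j ∈ Bᶜ, (q i - q j) * ∏ k ∈ B, q k with hS
  have h1 : e1 * Em = T + U := by
    rw [hT, hU, hEm, he1, ← Finset.sum_add_distrib, Finset.mul_sum]
    refine Finset.sum_congr rfl fun B _ => ?_
    rw [← add_mul, Finset.sum_add_sum_compl]
  have h2 : U = ((m:ℝ)+1) * En := der_esymm q m
  have h3 : (M:ℝ) * T - (m:ℝ) * (T + U) = S := by
    rw [hS, hT, hU, ← Finset.sum_add_distrib, Finset.mul_sum, Finset.mul_sum,
      ← Finset.sum_sub_distrib]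
    refine Finset.sum_congr rfl fun B hB => ?_
    have hBcard : B.card = m := (Finset.mem_powersetCard.mp hB).2
    have hBc : (Bᶜ).card = M - m := by
      rw [Finset.card_compl, hBcard, Fintype.card_fin]
    have hc : ((M - m : ℕ):ℝ) = (M:ℝ) - (m:ℝ) := by
      have h' : m ≤ M := by omega
      push_cast [h']
      ring
    have hstep1 : ∀ i ∈ B, ∑ j ∈ Bᶜ, (q i - q j) * ∏ k ∈ B, q k
        = (((M:ℝ) - m) * q i - ∑ j ∈ Bᶜ, q j) * ∏ k ∈ B, q k := by
      intro i _
      rw [← Finset.sum_mul]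
      congr 1
      rw [Finset.sum_sub_distrib, Finset.sum_const, hBc, nsmul_eq_mul, hc]
    rw [Finset.sum_congr rfl hstep1, ← Finset.sum_mul, Finset.sum_sub_distrib,
      ← Finset.mul_sum, Finset.sum_const, hBcard, nsmul_eq_mul]
    ring
  have h4 : 0 ≤ S := by
    rw [hS]
    cases m with
    | zero => simp
    | succ l =>
      rw [triple_reindex]
      refine Finset.sum_nonneg fun C _ => ?_
      have hfac : ∑ i ∈ Cᶜ, ∑ j ∈ (Cᶜ).erase i, (q i - q j) * (q i * ∏ k ∈ C, q k)
          = (∑ i ∈ Cᶜ, ∑ j ∈ (Cᶜ).erase i, (q i - q j) * q i) * ∏ k ∈ C, q k := by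
        rw [Finset.sum_mul]
        refine Finset.sum_congr rfl fun i _ => ?_
        rw [Finset.sum_mul]
        exact Finset.sum_congr rfl fun j _ => by ring
      rw [hfac]
      exact mul_nonneg (sym_nonneg q _) (Finset.prod_nonneg fun k _ => (hq k).le)
  have h0 : 0 ≤ (M:ℝ) * T - (m:ℝ) * (T + U) := by rw [h3]; exact h4
  calc ((m:ℝ)+1) * M * En
      = ((M:ℝ)-m)*(T+U) - ((M:ℝ)*T - (m:ℝ)*(T+U)) := by rw [h2]; ring
    _ ≤ ((M:ℝ)-m)*(T+U) := by linarith
    _ = ((M:ℝ)-m)*(e1*Em) := by rw [h1]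

/-- `P(S = k)` in terms of the elementary symmetric functions of the odds `pᵢ/(1−pᵢ)`. -/
lemma probSum_eq {M : ℕ} (p : Fin M → ℝ) (hp : ∀ i, p i ∈ Set.Ioo (0:ℝ) 1) (k : ℕ) :
    probSum p k = (∏ i, (1 - p i)) *
      ∑ B ∈ Finset.powersetCard k (Finset.univ : Finset (Fin M)),
        ∏ i ∈ B, p i / (1 - p i) := by
  have h1p : ∀ i, (0:ℝ) < 1 - p i := fun i => by linarith [(hp i).2]
  have hbij : Function.Bijective (fun (s : Finset (Fin M)) (i : Fin M) => decide (i ∈ s)) := by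
    constructor
    · intro s t h
      ext i
      have := congrFun h i
      simpa using this
    · intro x
      exact ⟨Finset.univ.filter (fun i => x i = true), by funext i; simp⟩
  have hsum := Fintype.sum_bijective _ hbij
    (fun s : Finset (Fin M) => if s.card = k then
        (∏ i, (1 - p i)) * ∏ i ∈ s, p i / (1 - p i) else 0)
    (fun x : Fin M → Bool => if onesCount x = k then bernProb p x else 0)
    (by
      intro s
      have hones : onesCount (fun i => decide (i ∈ s)) = s.card := by
        unfold onesCount
        congr 1
        ext i
        simp
      have hbern : bernProb p (fun i => decide (i ∈ s))
          = (∏ i, (1 - p i)) * ∏ i ∈ s, p i / (1 - p i) := by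
        unfold bernProb
        rw [← Finset.prod_mul_prod_compl s (fun i => if decide (i ∈ s) then p i else 1 - p i)]
        rw [← Finset.prod_mul_prod_compl s (fun i => 1 - p i)]
        have hA : ∏ i ∈ s, (if decide (i ∈ s) then p i else 1 - p i) = ∏ i ∈ s, p i :=
          Finset.prod_congr rfl fun i hi => by simp [hi]
        have hB : ∏ i ∈ sᶜ, (if decide (i ∈ s) then p i else 1 - p i)
            = ∏ i ∈ sᶜ, (1 - p i) :=
          Finset.prod_congr rfl fun i hi => by
            simp [Finset.mem_compl.mp hi]
        rw [hA, hB]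
        have hps : ∏ i ∈ s, p i = (∏ i ∈ s, (1 - p i)) * ∏ i ∈ s, p i / (1 - p i) := by
          rw [← Finset.prod_mul_distrib]
          exact Finset.prod_congr rfl fun i _ => by
            field_simp [(h1p i).ne']
        rw [hps]
        ring
      simp only [hones, hbern])
  unfold probSum
  rw [Finset.mul_sum, Finset.powersetCard_eq_filter, Finset.powerset_univ, Finset.sum_filter]
  exact hsum.symm

lemma probSum_pos {M : ℕ} (p : Fin M → ℝ) (hp : ∀ i, p i ∈ Set.Ioo (0:ℝ) 1) (k : ℕ)
    (hk : k ≤ M) : 0 < probSum p k := by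
  have h1p : ∀ i, (0:ℝ) < 1 - p i := fun i => by linarith [(hp i).2]
  rw [probSum_eq p hp k]
  refine mul_pos (Finset.prod_pos fun i _ => h1p i) ?_
  refine Finset.sum_pos (fun B _ => Finset.prod_pos fun i _ => div_pos (hp i).1 (h1p i)) ?_
  refine Finset.powersetCard_nonempty.mpr ?_
  simpa using hk

/-- for independent `{0,1}`-valued `X₁,…,X_M` with `P(Xᵢ=1) = pᵢ ∈ (0,1)`,
`S = ΣXᵢ` and `k* = (1/M)Σ pᵢ/(1−pᵢ)`, for every `1 ≤ n ≤ M`: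
`P(S=n−1)·(M−n+1)·k* ≥ n·P(S=n)`; equivalently `P(S=n−1)/P(S=n) ≥ n/((M−n+1)k*)`. -/
theorem stmt11 (M : ℕ) (p : Fin M → ℝ) (hp : ∀ i, p i ∈ Set.Ioo (0:ℝ) 1)
    (n : ℕ) (hn1 : 1 ≤ n) (hnM : n ≤ M) :
    probSum p (n - 1) * ((M : ℝ) - n + 1) * ((∑ i, p i / (1 - p i)) / M) ≥
        (n : ℝ) * probSum p n ∧
    probSum p (n - 1) / probSum p n ≥
        (n : ℝ) / (((M : ℝ) - n + 1) * ((∑ i, p i / (1 - p i)) / M)) := by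
  obtain ⟨m, rfl⟩ : ∃ m, n = m + 1 := ⟨n - 1, by omega⟩
  have h1p : ∀ i, (0:ℝ) < 1 - p i := fun i => by linarith [(hp i).2]
  have hq : ∀ i, 0 < p i / (1 - p i) := fun i => div_pos (hp i).1 (h1p i)
  have hM0 : 0 < M := by omega
  have hMR : (0:ℝ) < M := by exact_mod_cast hM0
  have hC : (0:ℝ) < ∏ i, (1 - p i) := Finset.prod_pos fun i _ => h1p i
  have hkey := key_ineq (fun i => p i / (1 - p i)) hq m hnM
  have hPn : 0 < probSum p (m + 1) := probSum_pos p hp (m + 1) hnM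
  have hc1 : (M:ℝ) - (↑(m+1):ℝ) + 1 = (M:ℝ) - m := by push_cast; ring
  set e1 := ∑ i, p i / (1 - p i) with he1
  have he1pos : 0 < e1 := by
    rw [he1]
    refine Finset.sum_pos (fun i _ => hq i) ?_
    exact ⟨⟨0, hM0⟩, Finset.mem_univ _⟩
  set Em := ∑ B ∈ Finset.powersetCard m (Finset.univ : Finset (Fin M)),
    ∏ i ∈ B, p i / (1 - p i) with hEm
  set En := ∑ A ∈ Finset.powersetCard (m+1) (Finset.univ : Finset (Fin M)),
    ∏ i ∈ A, p i / (1 - p i) with hEn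
  set C := ∏ i, (1 - p i) with hCdef
  have hPmE : probSum p (m + 1 - 1) = C * Em := by
    simp only [Nat.add_sub_cancel]
    exact probSum_eq p hp m
  have hPnE : probSum p (m + 1) = C * En := probSum_eq p hp (m + 1)
  have hmain : probSum p (m + 1 - 1) * ((M:ℝ) - (↑(m+1):ℝ) + 1) * (e1 / M)
      ≥ (↑(m+1):ℝ) * probSum p (m + 1) := by
    rw [hPmE, hPnE, hc1, ge_iff_le, ← sub_nonneg]
    have hexp : C * Em * ((M:ℝ) - m) * (e1 / M) - (↑(m+1):ℝ) * (C * En)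
        = (C / M) * (((M:ℝ) - m) * (e1 * Em) - ((m:ℝ)+1) * M * En) := by
      push_cast
      field_simp
    rw [hexp]
    exact mul_nonneg (div_nonneg hC.le hMR.le) (sub_nonneg.mpr hkey)
  refine ⟨hmain, ?_⟩
  have hD : 0 < ((M:ℝ) - (↑(m+1):ℝ) + 1) * (e1 / M) := by
    rw [hc1]
    have : (m:ℝ) < M := by exact_mod_cast hnM
    have h1 : (0:ℝ) < (M:ℝ) - m := by linarith
    exact mul_pos h1 (div_pos he1pos hMR)
  rw [ge_iff_le, div_le_div_iff₀ hD hPn]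
  calc (↑(m+1):ℝ) * probSum p (m + 1)
      ≤ probSum p (m + 1 - 1) * ((M:ℝ) - (↑(m+1):ℝ) + 1) * (e1 / M) := hmain
    _ = probSum p (m + 1 - 1) * (((M:ℝ) - (↑(m+1):ℝ) + 1) * (e1 / M)) := by ring
end

section
/- Let l : [0,1] → (0,1) be continuous and let ε > 0. Then there exist points 0 = u₁ < u₂ < … < u_N = 1 such that for each j ∈ {1, …, N−1}, setting k*_{j,ℓ} = (1/((u_{j+1}−u_j)ℓ)) Σ_{i : i/ℓ ∈ [u_j,u_{j+1}]} l(i/ℓ)/(1−l(i/ℓ)), the limit κ_j = lim_{ℓ→∞} k*_{j,ℓ} exists (and equals (1/(u_{j+1}−u_j)) ∫_{u_j}^{u_{j+1}} l(x)/(1−l(x)) dx), and l̄_j ≤ κ_j/(1+κ_j) ≤ l̄_j (1+ε), where l̄_j = (1/(u_{j+1}−u_j)) ∫_{u_j}^{u_{j+1}} l(x) dx is the average of l over [u_j, u_{j+1}]. -/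
open scoped Classical

/-- The Riemann-type average `k*_{j,ℓ}` of `l/(1−l)` over lattice points `i/ℓ` lying in
the interval `[a, b]`. -/
noncomputable def kstar (l : ℝ → ℝ) (a b : ℝ) (ℓ : ℕ) : ℝ :=
  (1 / ((b - a) * (ℓ : ℝ))) *
    ∑ i ∈ Finset.range ℓ,
      if a ≤ (i : ℝ) / (ℓ : ℝ) ∧ (i : ℝ) / (ℓ : ℝ) ≤ b then
        l ((i : ℝ) / (ℓ : ℝ)) / (1 - l ((i : ℝ) / (ℓ : ℝ))) else 0

/-- The limiting value `κ_j`: the average of `l/(1−l)` over `[a,b]`. -/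
noncomputable def kappa (l : ℝ → ℝ) (a b : ℝ) : ℝ :=
  (1 / (b - a)) * ∫ x in a..b, l x / (1 - l x)

/-- The average `l̄_j` of `l` over `[a,b]`. -/
noncomputable def lbar (l : ℝ → ℝ) (a b : ℝ) : ℝ :=
  (1 / (b - a)) * ∫ x in a..b, l x


section Aux

open MeasureTheory Set Filter Topology

set_option maxHeartbeats 1000000


lemma convexOn_congr {s : Set ℝ} {f g : ℝ → ℝ} (h : ConvexOn ℝ s f) (he : Set.EqOn f g s) :
    ConvexOn ℝ s g := by
  refine ⟨h.1, fun x hx y hy a b ha hb hab => ?_⟩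
  rw [← he hx, ← he hy, ← he (h.1 hx hy ha hb hab)]
  exact h.2 hx hy ha hb hab

lemma convexOn_ratio : ConvexOn ℝ (Set.Iio (1:ℝ)) (fun t => t / (1 - t)) := by
  have h1 : ConvexOn ℝ (Set.Ioi (0:ℝ)) (fun x : ℝ => x⁻¹) := by
    simpa using convexOn_zpow (𝕜 := ℝ) (-1)
  have h2 := h1.comp_affineMap ((AffineMap.lineMap (1:ℝ) (0:ℝ) : ℝ →ᵃ[ℝ] ℝ))
  have hpre : ((AffineMap.lineMap (1:ℝ) (0:ℝ) : ℝ →ᵃ[ℝ] ℝ)) ⁻¹' (Set.Ioi 0) = Set.Iio 1 := by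
    ext t
    simp only [Set.mem_preimage, AffineMap.lineMap_apply, Set.mem_Ioi, Set.mem_Iio,
      smul_eq_mul, vsub_eq_sub, vadd_eq_add]
    constructor <;> intro h <;> nlinarith
  rw [hpre] at h2
  have h3 := h2.add (convexOn_const (-1 : ℝ) (convex_Iio 1))
  refine convexOn_congr h3 (fun t ht => ?_)
  have h1t : (1:ℝ) - t ≠ 0 := by
    simp only [Set.mem_Iio] at ht; intro h; nlinarith
  simp only [Pi.add_apply, Function.comp_apply, AffineMap.lineMap_apply, vsub_eq_sub,
    vadd_eq_add, smul_eq_mul]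
  rw [show t * ((0:ℝ) - 1) + 1 = 1 - t by ring]
  field_simp
  ring

lemma riemann_core (f : ℝ → ℝ) (hf : Continuous f) (a b : ℝ) (ha : 0 ≤ a) (hab : a < b)
    (hb : b ≤ 1) :
    Tendsto (fun ℓ : ℕ => (1/(ℓ:ℝ)) * ∑ i ∈ Finset.range ℓ,
      if a ≤ (i:ℝ)/(ℓ:ℝ) ∧ (i:ℝ)/(ℓ:ℝ) ≤ b then f ((i:ℝ)/(ℓ:ℝ)) else 0)
      atTop (nhds (∫ x in a..b, f x)) := by
  obtain ⟨C, hC⟩ : ∃ C, ∀ x ∈ Icc (0:ℝ) 1, |f x| ≤ C :=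
    isCompact_Icc.exists_bound_of_continuousOn hf.continuousOn
  have hC0 : 0 ≤ C := le_trans (abs_nonneg _) (hC 0 ⟨le_refl _, zero_le_one⟩)
  set φ : ℕ → ℝ → ℝ := fun ℓ x => ((⌊(ℓ:ℝ)*x⌋ : ℤ) : ℝ)/(ℓ:ℝ) with hφ
  set g : ℕ → ℝ → ℝ := fun ℓ x =>
    if a ≤ φ ℓ x ∧ φ ℓ x ≤ b then f (φ ℓ x) else 0 with hg
  have hφmeas : ∀ ℓ : ℕ, Measurable (φ ℓ) := by
    intro ℓ
    exact ((measurable_from_top (f := (Int.cast : ℤ → ℝ))).comp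
      (Int.measurable_floor.comp (measurable_const.mul measurable_id))).div_const _
  have hgmeas : ∀ ℓ : ℕ, Measurable (g ℓ) := by
    intro ℓ
    have hs : MeasurableSet {x : ℝ | a ≤ φ ℓ x ∧ φ ℓ x ≤ b} := by
      have : {x : ℝ | a ≤ φ ℓ x ∧ φ ℓ x ≤ b} = φ ℓ ⁻¹' (Icc a b) := rfl
      rw [this]; exact (hφmeas ℓ) measurableSet_Icc
    exact Measurable.ite hs (hf.measurable.comp (hφmeas ℓ)) measurable_const
  have hbnd : ∀ ℓ : ℕ, ∀ x : ℝ, |g ℓ x| ≤ C := by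
    intro ℓ x
    simp only [hg]
    split_ifs with h
    · exact hC _ ⟨le_trans ha h.1, le_trans h.2 hb⟩
    · simpa using hC0
  -- Claim A : the Riemann sum equals the integral of the step function g ℓ
  have hcell : ∀ ℓ : ℕ, 0 < ℓ → ∀ i : ℕ, ∀ x ∈ Ico ((i:ℝ)/(ℓ:ℝ)) (((i:ℝ)+1)/(ℓ:ℝ)),
      (⌊(ℓ:ℝ)*x⌋ : ℤ) = (i : ℤ) := by
    intro ℓ hℓ i x hx
    have hℓ' : (0:ℝ) < (ℓ:ℝ) := by exact_mod_cast hℓ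
    have h1 := hx.1
    have h2 := hx.2
    rw [div_le_iff₀ hℓ'] at h1
    rw [lt_div_iff₀ hℓ'] at h2
    rw [Int.floor_eq_iff]
    constructor
    · push_cast
      linarith
    · push_cast
      linarith
  have hunion : ∀ ℓ : ℕ, 0 < ℓ →
      (⋃ i ∈ Finset.range ℓ, Ico ((i:ℝ)/(ℓ:ℝ)) (((i:ℝ)+1)/(ℓ:ℝ))) = Ico (0:ℝ) 1 := by
    intro ℓ hℓ
    have hℓ' : (0:ℝ) < (ℓ:ℝ) := by exact_mod_cast hℓ
    ext x
    simp only [mem_iUnion, Finset.mem_range, mem_Ico, exists_prop]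
    constructor
    · rintro ⟨i, hi, h1, h2⟩
      refine ⟨le_trans (by positivity) h1, lt_of_lt_of_le h2 ?_⟩
      rw [div_le_one hℓ']
      have : (i:ℝ) + 1 ≤ (ℓ:ℝ) := by exact_mod_cast hi
      linarith
    · rintro ⟨h0, h1⟩
      have hx0 : (0:ℝ) ≤ (ℓ:ℝ) * x := by positivity
      have hto : (((⌊(ℓ:ℝ)*x⌋).toNat : ℕ) : ℝ) = ((⌊(ℓ:ℝ)*x⌋ : ℤ) : ℝ) := by
        exact_mod_cast congrArg (fun z : ℤ => (z : ℝ))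
          (Int.toNat_of_nonneg (Int.floor_nonneg.2 hx0))
      refine ⟨(⌊(ℓ:ℝ)*x⌋).toNat, ?_, ?_, ?_⟩
      · have h2 : ((⌊(ℓ:ℝ)*x⌋ : ℤ) : ℝ) ≤ (ℓ:ℝ)*x := Int.floor_le _
        have h3 : (ℓ:ℝ)*x < (ℓ:ℝ)*1 := mul_lt_mul_of_pos_left h1 hℓ'
        have : (((⌊(ℓ:ℝ)*x⌋).toNat : ℕ) : ℝ) < (ℓ:ℝ) := by rw [hto]; linarith
        exact_mod_cast this
      · rw [div_le_iff₀ hℓ', hto, mul_comm]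
        exact Int.floor_le _
      · rw [lt_div_iff₀ hℓ', hto, mul_comm]
        exact Int.lt_floor_add_one _
  have hIntOn : ∀ ℓ : ℕ, ∀ s : Set ℝ, MeasurableSet s → volume s < ⊤ → IntegrableOn (g ℓ) s := by
    intro ℓ s hs hsvol
    apply Measure.integrableOn_of_bounded hsvol.ne ((hgmeas ℓ).aestronglyMeasurable)
    filter_upwards with x using (by simpa using hbnd ℓ x)
  have hA : ∀ ℓ : ℕ, 0 < ℓ → ∫ x in Ico (0:ℝ) 1, g ℓ x =
      (1/(ℓ:ℝ)) * ∑ i ∈ Finset.range ℓ,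
        (if a ≤ (i:ℝ)/(ℓ:ℝ) ∧ (i:ℝ)/(ℓ:ℝ) ≤ b then f ((i:ℝ)/(ℓ:ℝ)) else 0) := by
    intro ℓ hℓ
    have hℓ' : (0:ℝ) < (ℓ:ℝ) := by exact_mod_cast hℓ
    rw [← hunion ℓ hℓ, integral_biUnion_finset _ (fun i _ => measurableSet_Ico) ?_
      (fun i _ => hIntOn ℓ _ measurableSet_Ico (by simp [Real.volume_Ico]))]
    · rw [Finset.mul_sum]
      refine Finset.sum_congr rfl (fun i _ => ?_)
      have hconst : ∀ x ∈ Ico ((i:ℝ)/(ℓ:ℝ)) (((i:ℝ)+1)/(ℓ:ℝ)), g ℓ x =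
          (if a ≤ (i:ℝ)/(ℓ:ℝ) ∧ (i:ℝ)/(ℓ:ℝ) ≤ b then f ((i:ℝ)/(ℓ:ℝ)) else 0) := by
        intro x hx
        have hfl := hcell ℓ hℓ i x hx
        simp only [hg, hφ, hfl]
        norm_num
      rw [setIntegral_congr_fun measurableSet_Ico hconst, setIntegral_const, measureReal_def, Real.volume_Ico,
        smul_eq_mul]
      rw [show ((i:ℝ)+1)/(ℓ:ℝ) - (i:ℝ)/(ℓ:ℝ) = 1/(ℓ:ℝ) from by rw [add_div]; ring]
      rw [ENNReal.toReal_ofReal (by positivity)]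
    · intro i hi j hj hij
      simp only [Function.onFun]
      rw [Set.Ico_disjoint_Ico]
      rcases lt_or_gt_of_ne hij with h | h
      · refine le_trans (min_le_left _ _) (le_trans ?_ (le_max_right _ _))
        gcongr
        exact_mod_cast h
      · refine le_trans (min_le_right _ _) (le_trans ?_ (le_max_left _ _))
        gcongr
        exact_mod_cast h
  -- Claim B : dominated convergence
  haveI hfin : IsFiniteMeasure (volume.restrict (Ico (0:ℝ) 1)) := by
    constructor
    rw [Measure.restrict_apply_univ]
    simp [Real.volume_Ico]
  set h : ℝ → ℝ := (Ioo a b).indicator f with hh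
  have hae : ∀ᵐ x ∂(volume.restrict (Ico (0:ℝ) 1)), x ≠ a ∧ x ≠ b := by
    apply ae_restrict_of_ae
    have hz : volume ({a, b} : Set ℝ) = 0 :=
      Set.Finite.measure_zero (Set.toFinite ({a, b} : Set ℝ)) volume
    refine (MeasureTheory.ae_iff).2 (measure_mono_null ?_ hz)
    intro x hx
    simp only [Set.mem_setOf_eq, not_and_or, not_not] at hx
    rcases hx with hx | hx <;> simp [hx]
  have hlim : ∀ᵐ x ∂(volume.restrict (Ico (0:ℝ) 1)),
      Tendsto (fun ℓ : ℕ => g ℓ x) atTop (𝓝 (h x)) := by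
    filter_upwards [hae, ae_restrict_mem measurableSet_Ico] with x hx hxI
    obtain ⟨hxa, hxb⟩ := hx
    obtain ⟨hx0, hx1⟩ := hxI
    have hub : ∀ ℓ : ℕ, 0 < ℓ → φ ℓ x ≤ x := by
      intro ℓ hℓ
      have hℓ' : (0:ℝ) < (ℓ:ℝ) := by exact_mod_cast hℓ
      rw [hφ]
      dsimp only
      rw [div_le_iff₀ hℓ', mul_comm]
      exact Int.floor_le _
    have hlb : ∀ ℓ : ℕ, 0 < ℓ → x - 1/(ℓ:ℝ) < φ ℓ x := by
      intro ℓ hℓ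
      have hℓ' : (0:ℝ) < (ℓ:ℝ) := by exact_mod_cast hℓ
      rw [hφ]
      dsimp only
      rw [lt_div_iff₀ hℓ']
      have h1 : (ℓ:ℝ)*x - 1 < ((⌊(ℓ:ℝ)*x⌋ : ℤ) : ℝ) := Int.sub_one_lt_floor _
      have h2 : (x - 1/(ℓ:ℝ))*(ℓ:ℝ) = (ℓ:ℝ)*x - 1 := by field_simp
      linarith
    have htendφ : Tendsto (fun ℓ : ℕ => φ ℓ x) atTop (𝓝 x) := by
      have h1 : Tendsto (fun ℓ : ℕ => x - 1/(ℓ:ℝ)) atTop (𝓝 (x - 0)) :=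
        tendsto_const_nhds.sub tendsto_one_div_atTop_nhds_zero_nat
      rw [sub_zero] at h1
      refine tendsto_of_tendsto_of_tendsto_of_le_of_le' h1 tendsto_const_nhds ?_ ?_
      · filter_upwards [eventually_gt_atTop 0] with ℓ hℓ using (hlb ℓ hℓ).le
      · filter_upwards [eventually_gt_atTop 0] with ℓ hℓ using hub ℓ hℓ
    rcases lt_trichotomy x a with hca | hca | hca
    · have h0 : h x = 0 := by
        rw [hh]
        exact indicator_of_notMem (by rw [mem_Ioo]; intro hc; linarith [hc.1]) f
      rw [h0]
      apply Tendsto.congr' ?_ (tendsto_const_nhds (x := (0:ℝ)))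
      filter_upwards [eventually_gt_atTop 0] with ℓ hℓ
      rw [hg]
      dsimp only
      rw [if_neg]
      intro hc
      linarith [hub ℓ hℓ, hc.1]
    · exact absurd hca hxa
    · rcases lt_trichotomy x b with hcb | hcb | hcb
      · have h0 : h x = f x := indicator_of_mem (mem_Ioo.2 ⟨hca, hcb⟩) f
        rw [h0]
        have hft : Tendsto (fun ℓ : ℕ => f (φ ℓ x)) atTop (𝓝 (f x)) :=
          (hf.tendsto x).comp htendφ
        apply Tendsto.congr' ?_ hft
        have hev : ∀ᶠ ℓ : ℕ in atTop, 1/(ℓ:ℝ) < x - a :=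
          tendsto_one_div_atTop_nhds_zero_nat.eventually_lt_const (by linarith)
        filter_upwards [hev, eventually_gt_atTop 0] with ℓ h1 hℓ
        rw [hg]
        dsimp only
        rw [if_pos ⟨by linarith [hlb ℓ hℓ], le_trans (hub ℓ hℓ) hcb.le⟩]
      · exact absurd hcb hxb
      · have h0 : h x = 0 := by
          rw [hh]
          exact indicator_of_notMem (by rw [mem_Ioo]; intro hc; linarith [hc.2]) f
        rw [h0]
        apply Tendsto.congr' ?_ (tendsto_const_nhds (x := (0:ℝ)))
        have hev : ∀ᶠ ℓ : ℕ in atTop, 1/(ℓ:ℝ) < x - b :=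
          tendsto_one_div_atTop_nhds_zero_nat.eventually_lt_const (by linarith)
        filter_upwards [hev, eventually_gt_atTop 0] with ℓ h1 hℓ
        rw [hg]
        dsimp only
        rw [if_neg]
        intro hc
        linarith [hlb ℓ hℓ, hc.2]
  have hBnd : ∀ ℓ : ℕ, ∀ᵐ x ∂(volume.restrict (Ico (0:ℝ) 1)), ‖g ℓ x‖ ≤ C :=
    fun ℓ => ae_of_all _ (fun x => by simpa [Real.norm_eq_abs] using hbnd ℓ x)
  have hB : Tendsto (fun ℓ : ℕ => ∫ x in Ico (0:ℝ) 1, g ℓ x) atTop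
      (𝓝 (∫ x in Ico (0:ℝ) 1, h x)) :=
    tendsto_integral_of_dominated_convergence (fun _ => C)
      (fun ℓ => (hgmeas ℓ).aestronglyMeasurable) (integrable_const C) hBnd hlim
  have hCeq : ∫ x in Ico (0:ℝ) 1, h x = ∫ x in a..b, f x := by
    rw [hh, setIntegral_indicator measurableSet_Ioo]
    rw [show Ico (0:ℝ) 1 ∩ Ioo a b = Ioo a b from
      inter_eq_self_of_subset_right (fun x hx => ⟨by linarith [hx.1], by linarith [hx.2]⟩)]
    rw [intervalIntegral.integral_of_le hab.le, integral_Ioc_eq_integral_Ioo]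
  rw [hCeq] at hB
  apply Tendsto.congr' ?_ hB
  filter_upwards [eventually_gt_atTop 0] with ℓ hℓ using hA ℓ hℓ

-- monotonicity of k ↦ k/(1+k)
lemma gmono {k k' : ℝ} (h0 : 0 ≤ k) (h : k ≤ k') : k/(1+k) ≤ k'/(1+k') := by
  rw [div_le_div_iff₀ (by linarith) (by linarith)]
  nlinarith

lemma key (l : ℝ → ℝ) (hl : ContinuousOn l (Set.Icc 0 1))
    (hl01 : ∀ y ∈ Set.Icc (0:ℝ) 1, l y ∈ Set.Ioo (0:ℝ) 1)
    {m M : ℝ} (hm : 0 < m) (hM : M < 1)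
    (hmM : ∀ x ∈ Set.Icc (0:ℝ) 1, l x ∈ Set.Icc m M)
    (a b : ℝ) (ha : 0 ≤ a) (hab : a < b) (hb : b ≤ 1)
    (ε : ℝ) (hε : 0 < ε)
    (hosc : ∀ x ∈ Set.Icc a b, ∀ y ∈ Set.Icc a b, l x ≤ l y * (1 + ε)) :
    Tendsto (fun ℓ : ℕ => kstar l a b ℓ) atTop (nhds (kappa l a b)) ∧
    lbar l a b ≤ kappa l a b / (1 + kappa l a b) ∧
    kappa l a b / (1 + kappa l a b) ≤ lbar l a b * (1 + ε) := by
  have hmM' : m ≤ M := by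
    have := hmM 0 ⟨le_refl _, zero_le_one⟩
    linarith [this.1, this.2]
  have hsub : Set.Icc a b ⊆ Set.Icc (0:ℝ) 1 := Set.Icc_subset_Icc ha hb
  have hba : (0:ℝ) < b - a := by linarith
  -- (1) convergence
  have htendsto : Tendsto (fun ℓ : ℕ => kstar l a b ℓ) atTop (nhds (kappa l a b)) := by
    set c : ℝ → ℝ := fun x => max 0 (min x 1) with hc
    have hcmem : ∀ x : ℝ, c x ∈ Set.Icc (0:ℝ) 1 := fun x =>
      ⟨le_max_left _ _, max_le (by norm_num) (min_le_right _ _)⟩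
    have hccont : Continuous c := (continuous_const.max (continuous_id.min continuous_const))
    have hcid : ∀ x ∈ Set.Icc (0:ℝ) 1, c x = x := by
      intro x hx
      rw [hc]
      simp only
      rw [min_eq_left hx.2, max_eq_right hx.1]
    set G : ℝ → ℝ := fun x => l (c x) / (1 - l (c x)) with hG
    have hlc : Continuous (fun x => l (c x)) := hl.comp_continuous hccont hcmem
    have hGcont : Continuous G := by
      apply hlc.div (continuous_const.sub hlc)
      intro x
      have := (hl01 _ (hcmem x)).2
      show (1:ℝ) - l (c x) ≠ 0
      linarith
    have hR := riemann_core G hGcont a b ha hab hb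
    have hsum : ∀ ℓ : ℕ, kstar l a b ℓ = (1/(b-a)) * ((1/(ℓ:ℝ)) * ∑ i ∈ Finset.range ℓ,
        if a ≤ (i:ℝ)/(ℓ:ℝ) ∧ (i:ℝ)/(ℓ:ℝ) ≤ b then G ((i:ℝ)/(ℓ:ℝ)) else 0) := by
      intro ℓ
      rw [kstar, ← mul_assoc]
      congr 1
      · rw [one_div, one_div, one_div, mul_inv]
      · refine Finset.sum_congr rfl (fun i _ => ?_)
        split_ifs with hcond
        · rw [hG]
          simp only
          rw [hcid _ ⟨le_trans ha hcond.1, le_trans hcond.2 hb⟩]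
        · rfl
    have hint : (∫ x in a..b, G x) = ∫ x in a..b, l x / (1 - l x) := by
      apply intervalIntegral.integral_congr
      intro x hx
      rw [Set.uIcc_of_le hab.le] at hx
      rw [hG]
      simp only
      rw [hcid x (hsub hx)]
    rw [hint] at hR
    have := hR.const_mul (1/(b-a))
    rw [kappa]
    refine Tendsto.congr (fun ℓ => (hsum ℓ).symm) this
  refine ⟨htendsto, ?_⟩
  -- setup for inequalities
  have hlint : IntervalIntegrable l volume a b := by
    apply ContinuousOn.intervalIntegrable
    rw [Set.uIcc_of_le hab.le]
    exact hl.mono hsub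
  have hFcont : ContinuousOn (fun x => l x / (1 - l x)) (Set.Icc 0 1) := by
    apply hl.div (continuousOn_const.sub hl)
    intro x hx
    have := (hl01 x hx).2
    show (1:ℝ) - l x ≠ 0
    linarith
  have hFint : IntervalIntegrable (fun x => l x / (1 - l x)) volume a b := by
    apply ContinuousOn.intervalIntegrable
    rw [Set.uIcc_of_le hab.le]
    exact hFcont.mono hsub
  -- min and max of l on [a,b]
  obtain ⟨z, hzmem, hzmax⟩ := isCompact_Icc.exists_isMaxOn (Set.nonempty_Icc.2 hab.le)
    (hl.mono hsub)
  obtain ⟨w, hwmem, hwmin⟩ := isCompact_Icc.exists_isMinOn (Set.nonempty_Icc.2 hab.le)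
    (hl.mono hsub)
  have hlz := hmM z (hsub hzmem)
  have hlw := hmM w (hsub hwmem)
  have h1M : 0 < 1 - M := by linarith
  -- bounds for lbar
  have hlbar_ge : l w ≤ lbar l a b := by
    have h1 : (∫ x in a..b, (l w : ℝ)) ≤ ∫ x in a..b, l x :=
      intervalIntegral.integral_mono_on hab.le intervalIntegrable_const hlint
        (fun x hx => hwmin hx)
    rw [intervalIntegral.integral_const, smul_eq_mul] at h1
    rw [lbar]
    calc l w = (1/(b-a)) * ((b-a) * l w) := by field_simp
    _ ≤ (1/(b-a)) * ∫ x in a..b, l x := by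
        apply mul_le_mul_of_nonneg_left h1 (by positivity)
  have hlbar_le : lbar l a b ≤ M := by
    have h1 : (∫ x in a..b, l x) ≤ ∫ x in a..b, (M : ℝ) :=
      intervalIntegral.integral_mono_on hab.le hlint intervalIntegrable_const
        (fun x hx => (hmM x (hsub hx)).2)
    rw [intervalIntegral.integral_const, smul_eq_mul] at h1
    rw [lbar]
    calc (1/(b-a)) * ∫ x in a..b, l x ≤ (1/(b-a)) * ((b-a) * M) := by
          apply mul_le_mul_of_nonneg_left h1 (by positivity)
    _ = M := by field_simp
  have hlbar_pos : 0 < lbar l a b := lt_of_lt_of_le (lt_of_lt_of_le hm hlw.1) hlbar_ge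
  have hlbar_lt1 : lbar l a b < 1 := lt_of_le_of_lt hlbar_le hM
  have hkub : kappa l a b ≤ l z / (1 - l z) := by
    have h1 : (∫ x in a..b, l x/(1 - l x)) ≤ ∫ x in a..b, (l z/(1 - l z) : ℝ) := by
      apply intervalIntegral.integral_mono_on hab.le hFint intervalIntegrable_const
      intro x hx
      have hx1 := hmM x (hsub hx)
      have hle : l x ≤ l z := hzmax hx
      rw [div_le_div_iff₀ (by linarith [hx1.2]) (by linarith [hlz.2])]
      nlinarith
    rw [intervalIntegral.integral_const, smul_eq_mul] at h1
    rw [kappa]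
    calc (1/(b-a)) * ∫ x in a..b, l x/(1 - l x) ≤ (1/(b-a)) * ((b-a) * (l z/(1 - l z))) := by
          apply mul_le_mul_of_nonneg_left h1 (by positivity)
    _ = l z/(1 - l z) := by field_simp
  have hk0 : 0 ≤ kappa l a b := by
    rw [kappa]
    apply mul_nonneg (by positivity)
    apply intervalIntegral.integral_nonneg hab.le
    intro x hx
    have hx1 := hmM x (hsub hx)
    apply div_nonneg (by linarith [hx1.1]) (by linarith [hx1.2])
  -- Jensen
  haveI hfin : IsFiniteMeasure (volume.restrict (Set.Ioc a b)) := by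
    constructor
    rw [Measure.restrict_apply_univ]
    simp [Real.volume_Ioc]
  haveI hnz : NeZero (volume.restrict (Set.Ioc a b)) := by
    constructor
    rw [← Measure.measure_univ_ne_zero, Measure.restrict_apply_univ, Real.volume_Ioc]
    simp only [ne_eq, ENNReal.ofReal_eq_zero, not_le]
    linarith
  have hjensen : (lbar l a b)/(1 - lbar l a b) ≤ kappa l a b := by
    have hconv : ConvexOn ℝ (Set.Icc m M) (fun t => t/(1-t)) :=
      convexOn_ratio.subset (fun t ht => lt_of_le_of_lt ht.2 hM) (convex_Icc m M)
    have hcont : ContinuousOn (fun t : ℝ => t/(1-t)) (Set.Icc m M) := by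
      apply ContinuousOn.div continuousOn_id (continuousOn_const.sub continuousOn_id)
      intro t ht
      have := ht.2
      intro hc
      have : (1:ℝ) - t = 0 := hc
      linarith [ht.2]
    have hfs : ∀ᵐ x ∂(volume.restrict (Set.Ioc a b)), l x ∈ Set.Icc m M :=
      (ae_restrict_mem measurableSet_Ioc).mono
        (fun x hx => hmM x (hsub (Set.Ioc_subset_Icc_self hx)))
    have hfi : Integrable l (volume.restrict (Set.Ioc a b)) := hlint.1
    have hgi : Integrable ((fun t : ℝ => t/(1-t)) ∘ l) (volume.restrict (Set.Ioc a b)) :=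
      hFint.1
    have hJ := hconv.map_average_le hcont isClosed_Icc hfs hfi hgi
    have huniv : (volume.restrict (Set.Ioc a b)) Set.univ = ENNReal.ofReal (b-a) := by
      rw [Measure.restrict_apply_univ, Real.volume_Ioc]
    have havg : ∀ F : ℝ → ℝ,
        (⨍ x, F x ∂(volume.restrict (Set.Ioc a b))) = (1/(b-a)) * ∫ x in a..b, F x := by
      intro F
      rw [average_eq, measureReal_def, huniv, ENNReal.toReal_ofReal hba.le, smul_eq_mul,
        intervalIntegral.integral_of_le hab.le, one_div]
    rw [havg l, havg (fun x => l x/(1-l x))] at hJ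
    rw [kappa, lbar]
    exact hJ
  -- identity (t/(1-t))/(1 + t/(1-t)) = t for t < 1
  have hid : ∀ t : ℝ, t < 1 → (t/(1-t)) / (1 + t/(1-t)) = t := by
    intro t ht
    have h1t : (1:ℝ) - t ≠ 0 := by intro hc; linarith
    have h2 : 1 + t/(1-t) = 1/(1-t) := by field_simp; ring
    rw [h2]
    field_simp
  constructor
  · -- left inequality
    have hφ0 : 0 ≤ lbar l a b / (1 - lbar l a b) :=
      div_nonneg hlbar_pos.le (by linarith)
    have h3 := gmono hφ0 hjensen
    rw [hid (lbar l a b) hlbar_lt1] at h3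
    exact h3
  · -- right inequality
    have h2 := gmono hk0 hkub
    rw [hid (l z) (by linarith [hlz.2])] at h2
    have hzw : l z ≤ l w * (1+ε) := hosc z hzmem w hwmem
    have h4 : l w * (1+ε) ≤ lbar l a b * (1+ε) :=
      mul_le_mul_of_nonneg_right hlbar_ge (by linarith)
    linarith


end Aux

/-- for continuous `l : [0,1] → (0,1)` and `ε > 0` there is a partition
`0 = u₁ < u₂ < … < u_N = 1` such that on each subinterval `[u_j, u_{j+1}]` the lattice
averages `k*_{j,ℓ}` converge as `ℓ → ∞` to `κ_j`, the average of `l/(1−l)` over the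
subinterval, and `l̄_j ≤ κ_j/(1+κ_j) ≤ l̄_j(1+ε)` where `l̄_j` is the average of `l`. -/
theorem stmt15 (l : ℝ → ℝ) (hl : ContinuousOn l (Set.Icc 0 1))
    (hl01 : ∀ y ∈ Set.Icc (0:ℝ) 1, l y ∈ Set.Ioo (0:ℝ) 1)
    (ε : ℝ) (hε : 0 < ε) :
    ∃ (N : ℕ) (u : ℕ → ℝ), 2 ≤ N ∧ u 0 = 0 ∧ u (N - 1) = 1 ∧
      (∀ j, j < N - 1 → u j < u (j + 1)) ∧
      ∀ j, j < N - 1 →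
        Filter.Tendsto (fun ℓ : ℕ => kstar l (u j) (u (j + 1)) ℓ) Filter.atTop
            (nhds (kappa l (u j) (u (j + 1)))) ∧
        lbar l (u j) (u (j + 1)) ≤
            kappa l (u j) (u (j + 1)) / (1 + kappa l (u j) (u (j + 1))) ∧
        kappa l (u j) (u (j + 1)) / (1 + kappa l (u j) (u (j + 1))) ≤
            lbar l (u j) (u (j + 1)) * (1 + ε) := by
  have hne : (Set.Icc (0:ℝ) 1).Nonempty := ⟨0, le_refl _, zero_le_one⟩
  obtain ⟨xm, hxm, hxmin⟩ := isCompact_Icc.exists_isMinOn hne hl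
  obtain ⟨xM, hxM, hxmax⟩ := isCompact_Icc.exists_isMaxOn hne hl
  have hm : 0 < l xm := (hl01 xm hxm).1
  have hM : l xM < 1 := (hl01 xM hxM).2
  have hmM : ∀ x ∈ Set.Icc (0:ℝ) 1, l x ∈ Set.Icc (l xm) (l xM) :=
    fun x hx => ⟨hxmin hx, hxmax hx⟩
  have huc := isCompact_Icc.uniformContinuousOn_of_continuous hl
  rw [Metric.uniformContinuousOn_iff] at huc
  obtain ⟨δ, hδ, hδ'⟩ := huc (ε * l xm) (by positivity)
  obtain ⟨n, hn⟩ := exists_nat_one_div_lt (ε := δ) hδ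
  have hnpos : (0:ℝ) < (n:ℝ) + 1 := by positivity
  refine ⟨n + 2, fun j => (j:ℝ)/((n:ℝ)+1), by omega, by simp, ?_, ?_, ?_⟩
  · show (((n + 2 - 1 : ℕ)):ℝ)/((n:ℝ)+1) = 1
    rw [show n + 2 - 1 = n + 1 from rfl]
    push_cast
    field_simp
  · intro j hj
    show (j:ℝ)/((n:ℝ)+1) < ((j+1:ℕ):ℝ)/((n:ℝ)+1)
    rw [div_lt_div_iff₀ hnpos hnpos]
    push_cast
    nlinarith
  · intro j hj
    have hj' : j ≤ n := by omega
    have hbnd : ((j+1:ℕ):ℝ)/((n:ℝ)+1) ≤ 1 := by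
      rw [div_le_one hnpos]
      push_cast
      have : (j:ℝ) ≤ (n:ℝ) := by exact_mod_cast hj'
      linarith
    have ha0 : (0:ℝ) ≤ (j:ℝ)/((n:ℝ)+1) := by positivity
    have hab : (j:ℝ)/((n:ℝ)+1) < ((j+1:ℕ):ℝ)/((n:ℝ)+1) := by
      rw [div_lt_div_iff₀ hnpos hnpos]
      push_cast
      nlinarith
    apply key l hl hl01 hm hM hmM _ _ ha0 hab hbnd ε hε
    -- oscillation
    intro x hx y hy
    have hsub2 : Set.Icc ((j:ℝ)/((n:ℝ)+1)) (((j+1:ℕ):ℝ)/((n:ℝ)+1)) ⊆ Set.Icc (0:ℝ) 1 :=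
      Set.Icc_subset_Icc ha0 hbnd
    have hxI := hsub2 hx
    have hyI := hsub2 hy
    have hlen : ((j+1:ℕ):ℝ)/((n:ℝ)+1) - (j:ℝ)/((n:ℝ)+1) = 1/((n:ℝ)+1) := by
      push_cast
      field_simp
      ring
    have hdist : dist x y < δ := by
      rw [Real.dist_eq, abs_lt]
      have h1 := hx.1; have h2 := hx.2; have h3 := hy.1; have h4 := hy.2
      constructor <;> nlinarith [hn, hlen]
    have hd := hδ' x hxI y hyI hdist
    rw [Real.dist_eq, abs_lt] at hd
    have hmy : l xm ≤ l y := hxmin hyI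
    nlinarith [hd.2, hd.1]
end

section
/- Let X be a geometric random variable with P(X = k) = (1−p) p^k for k ∈ ℤ₊, where p ∈ (0,1); then E X = p/(1−p) and Var X = p/(1−p)². (a) If p < 1/2 (so E X < 1), then E|X − E X|³ ≤ 7 Var X. (b) If p ≥ 1/2 (so E X ≥ 1), then E|X − E X|³ ≤ 28 (E X)(Var X). -/
private lemma c2R (n : ℕ) : (((n + 2).choose 2 : ℕ) : ℝ) = ((n : ℝ) + 1) * ((n : ℝ) + 2) / 2 := by
  induction n with
  | zero => norm_num
  | succ n ih =>
    have : n + 1 + 2 = (n + 2) + 1 := rfl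
    rw [this, Nat.choose_succ_succ, Nat.choose_one_right]
    push_cast [ih]
    ring

private lemma c3R (n : ℕ) :
    (((n + 3).choose 3 : ℕ) : ℝ) = ((n : ℝ) + 1) * ((n : ℝ) + 2) * ((n : ℝ) + 3) / 6 := by
  induction n with
  | zero => norm_num
  | succ n ih =>
    have h2 := c2R (n + 1)
    rw [show n + 1 + 2 = n + 3 from rfl] at h2
    rw [show (n + 1 + 3).choose 3 = (n + 3).choose 2 + (n + 3).choose 3 from
      Nat.choose_succ_succ' (n + 3) 2]
    push_cast [ih, h2]
    ring

private lemma geom_moments {p : ℝ} (h0 : 0 < p) (h1 : p < 1) :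
    HasSum (fun n : ℕ => (p : ℝ) ^ n) (1 / (1 - p)) ∧
    HasSum (fun n : ℕ => (n : ℝ) * p ^ n) (p / (1 - p) ^ 2) ∧
    HasSum (fun n : ℕ => (n : ℝ) ^ 2 * p ^ n) (p * (1 + p) / (1 - p) ^ 3) ∧
    HasSum (fun n : ℕ => (n : ℝ) ^ 3 * p ^ n) (p * (1 + 4 * p + p ^ 2) / (1 - p) ^ 4) := by
  have hn : ‖p‖ < 1 := by rw [Real.norm_eq_abs, abs_of_pos h0]; exact h1
  have hq : (0 : ℝ) < 1 - p := by linarith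
  have hq' : (1 : ℝ) - p ≠ 0 := ne_of_gt hq
  have H0 : HasSum (fun n : ℕ => (p : ℝ) ^ n) (1 / (1 - p)) := by
    simpa [one_div] using hasSum_geometric_of_norm_lt_one hn
  have H1 : HasSum (fun n : ℕ => (n : ℝ) * p ^ n) (p / (1 - p) ^ 2) :=
    hasSum_coe_mul_geometric_of_norm_lt_one hn
  have C2 := hasSum_choose_mul_geometric_of_norm_lt_one 2 hn
  have C3 := hasSum_choose_mul_geometric_of_norm_lt_one 3 hn
  have H2 : HasSum (fun n : ℕ => (n : ℝ) ^ 2 * p ^ n) (p * (1 + p) / (1 - p) ^ 3) := by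
    have H := ((C2.mul_left 2).sub (H1.mul_left 3)).sub (H0.mul_left 2)
    convert H using 1
    · rfl
    · funext n
      rw [c2R]
      ring
    · field_simp
      ring
  refine ⟨H0, H1, H2, ?_⟩
  have H := (((C3.mul_left 6).sub (H2.mul_left 6)).sub (H1.mul_left 11)).sub (H0.mul_left 6)
  convert H using 1
  · rfl
  · funext n
    rw [c3R]
    ring
  · field_simp
    ring

/-- for a geometric random variable `X` with `P(X=k) = (1−p)pᵏ`, `k ∈ ℤ₊`,
`p ∈ (0,1)`: `E X = p/(1−p)` and `Var X = p/(1−p)²`; moreover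
(a) if `p < 1/2` then `E|X − EX|³ ≤ 7 Var X`, and
(b) if `p ≥ 1/2` then `E|X − EX|³ ≤ 28 (E X)(Var X)`. -/
theorem stmt17 (p : ℝ) (hp : p ∈ Set.Ioo (0:ℝ) 1) :
    (∑' k : ℕ, (1 - p) * p ^ k * (k : ℝ)) = p / (1 - p) ∧
    (∑' k : ℕ, (1 - p) * p ^ k * ((k : ℝ) - p / (1 - p)) ^ 2) = p / (1 - p) ^ 2 ∧
    (p < 1 / 2 →
      (∑' k : ℕ, (1 - p) * p ^ k * |(k : ℝ) - p / (1 - p)| ^ 3) ≤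
        7 * (p / (1 - p) ^ 2)) ∧
    (1 / 2 ≤ p →
      (∑' k : ℕ, (1 - p) * p ^ k * |(k : ℝ) - p / (1 - p)| ^ 3) ≤
        28 * (p / (1 - p)) * (p / (1 - p) ^ 2)) := by
  obtain ⟨hp0, hp1⟩ := hp
  have hq : (0 : ℝ) < 1 - p := by linarith
  have hq' : (1 : ℝ) - p ≠ 0 := ne_of_gt hq
  obtain ⟨H0, H1, H2, H3⟩ := geom_moments hp0 hp1
  have hμ0 : 0 ≤ p / (1 - p) := div_nonneg hp0.le hq.le
  -- mean
  have hmean : HasSum (fun k : ℕ => (1 - p) * p ^ k * (k : ℝ)) (p / (1 - p)) := by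
    have H := H1.mul_left (1 - p)
    convert H using 1
    · rfl
    · funext k; ring
    · field_simp
  -- variance
  have hvar : HasSum (fun k : ℕ => (1 - p) * p ^ k * ((k : ℝ) - p / (1 - p)) ^ 2)
      (p / (1 - p) ^ 2) := by
    have H := ((H2.mul_left (1 - p)).sub (H1.mul_left ((1 - p) * (2 * (p / (1 - p)))))).add
      (H0.mul_left ((1 - p) * (p / (1 - p)) ^ 2))
    convert H using 1
    · rfl
    · funext k; ring
    · field_simp
      ring
  -- third-moment upper bound function
  have hcube : HasSum
      (fun k : ℕ => (1 - p) * p ^ k * (((k : ℝ) + p / (1 - p)) * ((k : ℝ) - p / (1 - p)) ^ 2))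
      (p * (1 + 3 * p) / (1 - p) ^ 3) := by
    have H := (((H3.mul_left (1 - p)).sub (H2.mul_left ((1 - p) * (p / (1 - p))))).sub
      (H1.mul_left ((1 - p) * (p / (1 - p)) ^ 2))).add
      (H0.mul_left ((1 - p) * (p / (1 - p)) ^ 3))
    convert H using 1
    · rfl
    · funext k; ring
    · field_simp
      ring
  -- pointwise bound
  have hle : ∀ k : ℕ, (1 - p) * p ^ k * |(k : ℝ) - p / (1 - p)| ^ 3 ≤
      (1 - p) * p ^ k * (((k : ℝ) + p / (1 - p)) * ((k : ℝ) - p / (1 - p)) ^ 2) := by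
    intro k
    have hpk : 0 ≤ (1 - p) * p ^ k := mul_nonneg hq.le (pow_nonneg hp0.le k)
    apply mul_le_mul_of_nonneg_left _ hpk
    have hk : (0 : ℝ) ≤ (k : ℝ) := Nat.cast_nonneg k
    have habs : |(k : ℝ) - p / (1 - p)| ≤ (k : ℝ) + p / (1 - p) :=
      abs_le.2 ⟨by linarith, by linarith⟩
    calc |(k : ℝ) - p / (1 - p)| ^ 3
        = |(k : ℝ) - p / (1 - p)| * ((k : ℝ) - p / (1 - p)) ^ 2 := by
          rw [← sq_abs ((k : ℝ) - p / (1 - p))]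
          ring
      _ ≤ ((k : ℝ) + p / (1 - p)) * ((k : ℝ) - p / (1 - p)) ^ 2 :=
          mul_le_mul_of_nonneg_right habs (sq_nonneg _)
  have hnonneg : ∀ k : ℕ, 0 ≤ (1 - p) * p ^ k * |(k : ℝ) - p / (1 - p)| ^ 3 := fun k =>
    mul_nonneg (mul_nonneg hq.le (pow_nonneg hp0.le k)) (pow_nonneg (abs_nonneg _) 3)
  have hsum : Summable (fun k : ℕ => (1 - p) * p ^ k * |(k : ℝ) - p / (1 - p)| ^ 3) :=
    Summable.of_nonneg_of_le hnonneg hle hcube.summable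
  have hT : (∑' k : ℕ, (1 - p) * p ^ k * |(k : ℝ) - p / (1 - p)| ^ 3) ≤
      p * (1 + 3 * p) / (1 - p) ^ 3 := by
    rw [← hcube.tsum_eq]
    exact Summable.tsum_le_tsum hle hsum hcube.summable
  refine ⟨hmean.tsum_eq, hvar.tsum_eq, ?_, ?_⟩
  · intro hhalf
    refine hT.trans ?_
    rw [div_le_iff₀ (by positivity : (0:ℝ) < (1 - p) ^ 3)]
    have h7 : 7 * (p / (1 - p) ^ 2) * (1 - p) ^ 3 = 7 * p * (1 - p) := by
      field_simp
    rw [h7]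
    nlinarith [mul_nonneg hp0.le (show (0:ℝ) ≤ 3 - 5 * p by linarith)]
  · intro hhalf
    refine hT.trans ?_
    rw [div_le_iff₀ (by positivity : (0:ℝ) < (1 - p) ^ 3)]
    have h28 : 28 * (p / (1 - p)) * (p / (1 - p) ^ 2) * (1 - p) ^ 3 = 28 * p * p := by
      field_simp
    rw [h28]
    nlinarith [mul_nonneg hp0.le (show (0:ℝ) ≤ 25 * p - 1 by linarith)]
end
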